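/- arXiv:1707.02847 — 6 statements merged into one kernel-verified Lean document; each statement's English description precedes it below -/
import Mathlib

section
/- For every field F and every subset S of the six pentachora of ∂Δ⁵ with |S| ≤ 3, any permitted coloring of C_S that vanishes on all boundary tetrahedra of C_S is identically zero; equivalently, the restriction map from permitted colorings of C_S to colorings of the boundary tetrahedra is injective (this gives the multiplicities a₁ = a₂ = a₃ = 1). -/
open Finset

/-- The 5×5 integer matrix 𝓡. -/
def Rmat : Matrix (Fin 5) (Fin 5) ℤ :=
  !![0, -2, 1, 1, -2;
     0, -1, 0, 1, -1;
     -1, 2, -2, 0, 1;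
     -1, 3, -2, -1, 2;
     0, 1, -1, 0, 0]

/-- The table of 2-columns ψ for a tetrahedron with (sorted) vertices indexed by `Fin 4`:
for indices a < c, the value of ψ on the edge joining the a-th and the c-th vertex. -/
def psiPair (F : Type*) [Field F] (a c : Fin 4) : F × F :=
  if a = 0 ∧ c = 1 then (-1, 1)
  else if a = 0 ∧ c = 2 then (2, -1)
  else if a = 0 ∧ c = 3 then (-1, 0)
  else if a = 1 ∧ c = 2 then (-1, 0)
  else if a = 1 ∧ c = 3 then (0, 1)
  else if a = 2 ∧ c = 3 then (1, -1)
  else (0, 0)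

/-- ψ_{t,b} for a tetrahedron `t` (a 4-element subset of the vertex set) and an edge `b`:
zero when `b ⊄ t`, and the corresponding table value otherwise. -/
def psi (F : Type*) [Field F] {V : Type*} [LinearOrder V]
    (t : Finset V) (ht : t.card = 4) (b : Finset V) : F × F :=
  ∑ a : Fin 4, ∑ c : Fin 4,
    if a < c ∧ b = {t.orderEmbOfFin ht a, t.orderEmbOfFin ht c} then psiPair F a c else 0

/-- The i-th vertex (in increasing order) of a pentachoron `u`. -/
def pentVert {V : Type*} [LinearOrder V] (u : Finset V) (hu : u.card = 5) (i : Fin 5) : V :=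
  u.orderEmbOfFin hu i

/-- The i-th tetrahedral 3-face of a pentachoron `u`: it omits the i-th vertex. -/
def pentFace {V : Type*} [LinearOrder V] (u : Finset V) (hu : u.card = 5) (i : Fin 5) :
    Finset V :=
  u.erase (pentVert u hu i)

/-- A coloring χ (assigning a pair (x_t, y_t) ∈ F × F to each tetrahedron) is permitted on a
pentachoron `u` if the column of y-values on its five 3-faces equals 𝓡 applied to the column
of x-values. -/
def PermittedOn {V : Type*} [LinearOrder V] {F : Type*} [Field F]
    (u : Finset V) (hu : u.card = 5) (χ : Finset V → F × F) : Prop :=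
  ∀ i : Fin 5,
    (χ (pentFace u hu i)).2 = ∑ j : Fin 5, (Rmat i j : F) * (χ (pentFace u hu j)).1

/-- The coloring assigning ψ_{t,b} to every tetrahedron `t`. -/
def Xi (F : Type*) [Field F] {V : Type*} [LinearOrder V] (b : Finset V) :
    Finset V → F × F :=
  fun t => if ht : t.card = 4 then psi F t ht b else 0


/-- A coloring χ is permitted on the subcomplex C_S determined by a set S of pentachora of ∂Δ⁵
if it is permitted on every pentachoron of S. -/
def PermittedOnS (F : Type*) [Field F] (S : Finset (Finset (Fin 6)))
    (χ : Finset (Fin 6) → F × F) : Prop :=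
  ∀ u ∈ S, ∀ hu : u.card = 5, PermittedOn u hu χ

/-- t is a tetrahedron of the subcomplex C_S. -/
def IsTetOf (S : Finset (Finset (Fin 6))) (t : Finset (Fin 6)) : Prop :=
  t.card = 4 ∧ ∃ u ∈ S, t ⊆ u

/-- t is an inner tetrahedron of C_S: every pentachoron containing t belongs to S. -/
def IsInnerTet (S : Finset (Finset (Fin 6))) (t : Finset (Fin 6)) : Prop :=
  IsTetOf S t ∧ ∀ u : Finset (Fin 6), u.card = 5 → t ⊆ u → u ∈ S

/-- t is a boundary tetrahedron of C_S: it is a tetrahedron of C_S contained in some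
pentachoron not in S. -/
def IsBoundaryTet (S : Finset (Finset (Fin 6))) (t : Finset (Fin 6)) : Prop :=
  IsTetOf S t ∧ ∃ u : Finset (Fin 6), u.card = 5 ∧ t ⊆ u ∧ u ∉ S

/-- The set of all six pentachora of ∂Δ⁵. -/
def Pent : Finset (Finset (Fin 6)) := Finset.univ.filter (fun u => u.card = 5)

/-!
Fix a pentachoron `u ∈ S`. Each 3-face of `u` lies in exactly one other pentachoron, and these
five pentachora are distinct, so `|S| ≤ 3` leaves at most two faces of `u` inner: a coloring
vanishing on the boundary is supported on at most two faces of `u`. For every pair of columns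
`{i, j}` of 𝓡, the three rows outside `{i, j}` contain a 2 × 2 minor equal to `±1`, so over any
field the relation `y = 𝓡 x` forces such a coloring to vanish on all of `u`.
-/

lemma eq_zero_of_isUnit_det_two {A : Type*} [CommRing A] {a b c d x y : A}
    (hdet : IsUnit (a * d - b * c)) (h₁ : a * x + b * y = 0) (h₂ : c * x + d * y = 0) :
    x = 0 ∧ y = 0 :=
  ⟨hdet.mul_right_eq_zero.mp (by linear_combination d * h₁ - b * h₂),
    hdet.mul_right_eq_zero.mp (by linear_combination a * h₂ - c * h₁)⟩

lemma Matrix.eq_zero_of_isUnit_minor {ι A : Type*} [Fintype ι] [CommRing A] (R : Matrix ι ι ℤ)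
    {i j k l : ι} (hij : i ≠ j) (hminor : IsUnit (R k i * R l j - R k j * R l i))
    {x : ι → A} (hx : ∀ m, m ≠ i → m ≠ j → x m = 0)
    (hk : ∑ m, (R k m : A) * x m = 0) (hl : ∑ m, (R l m : A) * x m = 0) : x = 0 := by
  have hsupp (r : ι) : ∑ m, (R r m : A) * x m = R r i * x i + R r j * x j :=
    Fintype.sum_eq_add i j hij fun m hm => by rw [hx m hm.1 hm.2, mul_zero]
  rw [hsupp] at hk hl
  have hminor' : IsUnit ((R k i : A) * R l j - R k j * R l i) := by
    simpa using hminor.map (Int.castRingHom A)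
  obtain ⟨hi, hj⟩ := eq_zero_of_isUnit_det_two hminor' hk hl
  funext m
  by_cases hmi : m = i
  · rw [hmi, hi, Pi.zero_apply]
  by_cases hmj : m = j
  · rw [hmj, hj, Pi.zero_apply]
  exact hx m hmi hmj

lemma Rmat_exists_isUnit_minor :
    ∀ i j : Fin 5, i ≠ j → ∃ k l : Fin 5, k ≠ i ∧ k ≠ j ∧ l ≠ i ∧ l ≠ j ∧
      IsUnit (Rmat k i * Rmat l j - Rmat k j * Rmat l i) := by
  simp only [Int.isUnit_iff]
  decide

lemma PermittedOn.eq_zero_of_card_support_le_two {V F : Type*} [LinearOrder V] [Field F]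
    {u : Finset V} {hu : u.card = 5} {χ : Finset V → F × F} (hχ : PermittedOn u hu χ)
    {s : Finset (Fin 5)} (hs : s.card ≤ 2) (hχs : ∀ k ∉ s, χ (pentFace u hu k) = 0)
    (k : Fin 5) : χ (pentFace u hu k) = 0 := by
  obtain ⟨p, hsp, hp⟩ := exists_superset_card_eq hs (by simp)
  obtain ⟨i, j, hij, rfl⟩ := card_eq_two.mp hp
  have hoff (m : Fin 5) (hmi : m ≠ i) (hmj : m ≠ j) : χ (pentFace u hu m) = 0 :=
    hχs m fun hm => by simpa [hmi, hmj] using hsp hm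
  obtain ⟨r, r', hri, hrj, hr'i, hr'j, hminor⟩ := Rmat_exists_isUnit_minor i j hij
  have hx : (fun m => (χ (pentFace u hu m)).1) = 0 :=
    Rmat.eq_zero_of_isUnit_minor hij hminor (fun m hmi hmj => by simp [hoff m hmi hmj])
      (by rw [← hχ r, hoff r hri hrj, Prod.snd_zero])
      (by rw [← hχ r', hoff r' hr'i hr'j, Prod.snd_zero])
  have hx' (m : Fin 5) : (χ (pentFace u hu m)).1 = 0 := congrFun hx m
  exact Prod.ext (hx' k) (by simp [hχ k, hx'])

lemma pentFace_card {V : Type*} [LinearOrder V] (u : Finset V) (hu : u.card = 5) (i : Fin 5) :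
    (pentFace u hu i).card = 4 := by
  rw [pentFace, pentVert, card_erase_of_mem (u.orderEmbOfFin_mem hu i), hu]

lemma exists_eq_pentFace {V : Type*} [LinearOrder V] {u t : Finset V} (hu : u.card = 5)
    (ht : t.card = 4) (htu : t ⊆ u) : ∃ i, t = pentFace u hu i := by
  classical
  have hcov : t ⋖ u :=
    covBy_iff_card_sdiff_eq_one.mpr ⟨htu, by rw [card_sdiff_of_subset htu, hu, ht]⟩
  obtain ⟨a, ha, rfl⟩ := hcov.exists_finset_erase
  obtain ⟨i, rfl⟩ : a ∈ Set.range (u.orderEmbOfFin hu) := by rwa [range_orderEmbOfFin]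
  exact ⟨i, rfl⟩

lemma exists_card_le_two_forall_isBoundaryTet_pentFace {S : Finset (Finset (Fin 6))}
    (hcard : S.card ≤ 3) {u : Finset (Fin 6)} (huS : u ∈ S) (hu : u.card = 5) :
    ∃ s : Finset (Fin 5), s.card ≤ 2 ∧ ∀ k ∉ s, IsBoundaryTet S (pentFace u hu k) := by
  set opp : Fin 5 → Finset (Fin 6) := fun k => univ.erase (pentVert u hu k)
  have hopp_ne (k : Fin 5) : opp k ≠ u :=
    (ne_of_mem_of_not_mem' (u.orderEmbOfFin_mem hu k) (notMem_erase _ _)).symm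
  have hopp_inj : Function.Injective opp := fun k k' h =>
    (u.orderEmbOfFin hu).injective <| (erase_inj _ (mem_univ _)).mp h
  refine ⟨univ.filter (fun k => opp k ∈ S), ?_, fun k hk => ?_⟩
  · calc _ ≤ (S.erase u).card :=
          card_le_card_of_injOn opp
            (fun k hk => mem_erase.mpr ⟨hopp_ne k, (mem_filter.mp hk).2⟩) hopp_inj.injOn
      _ ≤ 2 := by rw [card_erase_of_mem huS]; omega
  · refine ⟨⟨pentFace_card u hu k, u, huS, erase_subset _ _⟩, opp k, ?_,
      erase_subset_erase _ (subset_univ u), by simpa using hk⟩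
    simp [opp, card_erase_of_mem]

/-- for every field F and every subset S of the six pentachora of ∂Δ⁵ with
|S| ≤ 3, any permitted coloring of C_S vanishing on all boundary tetrahedra of C_S vanishes
on all tetrahedra of C_S (so the restriction map to boundary colorings is injective, giving
multiplicities a₁ = a₂ = a₃ = 1). -/
theorem statement4 (F : Type*) [Field F] (S : Finset (Finset (Fin 6)))
    (hS : ∀ u ∈ S, u.card = 5) (hcard : S.card ≤ 3)
    (χ : Finset (Fin 6) → F × F) (hperm : PermittedOnS F S χ)
    (hbd : ∀ t, IsBoundaryTet S t → χ t = 0) :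
    ∀ t, IsTetOf S t → χ t = 0 := by
  rintro t ⟨ht, u, huS, htu⟩
  have hu := hS u huS
  obtain ⟨k, rfl⟩ := exists_eq_pentFace hu ht htu
  obtain ⟨s, hs, hbd_s⟩ := exists_card_le_two_forall_isBoundaryTet_pentFace hcard huS hu
  exact (hperm u huS hu).eq_zero_of_card_support_le_two hs (fun m hm => hbd _ (hbd_s m hm)) k
end

section
/- Let F be a field of characteristic 2. For every permitted coloring of ∂Δ⁵, the cocycle sum of the polynomial c(a,b,c,d,e) = de+ce+ae+cd+bd+c²+bc+ac+ab vanishes: Σ_{i=1}^{6} (−1)^{i−1} c[u_i] = 0 in F, where u_i = {1,…,6}∖{i}. -/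
set_option maxRecDepth 8000
set_option maxHeartbeats 1000000


open Finset

/-- A coloring of ∂Δ⁵ (vertex set `Fin 6`) is permitted if it is permitted on each of the six
pentachora, i.e., on every 5-element subset of the vertices. -/
def Permitted {F : Type*} [Field F] (χ : Finset (Fin 6) → F × F) : Prop :=
  ∀ (u : Finset (Fin 6)) (hu : u.card = 5), PermittedOn u hu χ

lemma card_erase6 (i : Fin 6) : ((univ : Finset (Fin 6)).erase i).card = 5 := by
  rw [Finset.card_erase_of_mem (mem_univ i)]
  simp

/-- `xv F χ i j` is the x-value of the coloring χ on the j-th 3-face (the one omitting the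
j-th smallest vertex) of the pentachoron u_i = {1,…,6} ∖ {i} of ∂Δ⁵; for the pentachoron
u_i this gives the substitutions a = xv i 0, b = xv i 1, c = xv i 2, d = xv i 3,
e = xv i 4. -/
def xv (F : Type*) [Field F] (χ : Finset (Fin 6) → F × F) (i : Fin 6) (j : Fin 5) : F :=
  (χ (pentFace ((univ : Finset (Fin 6)).erase i) (card_erase6 i) j)).1

/-- char 2: the cocycle sum of de+ce+ae+cd+bd+c²+bc+ac+ab over a permitted coloring of ∂Δ⁵ vanishes. -/
theorem statement10 (F : Type*) [Field F] [CharP F 2]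
    (χ : Finset (Fin 6) → F × F) (hχ : Permitted χ) :
    ∑ i : Fin 6, (-1 : F) ^ (i : ℕ) *
      (let a := xv F χ i 0; let b := xv F χ i 1; let c := xv F χ i 2;
       let d := xv F χ i 3; let e := xv F χ i 4;
       d*e + c*e + a*e + c*d + b*d + c^2 + b*c + a*c + a*b) = 0 := by
  have h2 : (2:F) = 0 := CharTwo.two_eq_zero
  have hv0 : pentVert ((univ : Finset (Fin 6)).erase 0) (card_erase6 0) = ![1,2,3,4,5] := by
    funext i; rw [pentVert, Finset.orderEmbOfFin_unique (card_erase6 0) (f := ![1,2,3,4,5]) (by decide) (by decide)]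
  have hv1 : pentVert ((univ : Finset (Fin 6)).erase 1) (card_erase6 1) = ![0,2,3,4,5] := by
    funext i; rw [pentVert, Finset.orderEmbOfFin_unique (card_erase6 1) (f := ![0,2,3,4,5]) (by decide) (by decide)]
  have hv2 : pentVert ((univ : Finset (Fin 6)).erase 2) (card_erase6 2) = ![0,1,3,4,5] := by
    funext i; rw [pentVert, Finset.orderEmbOfFin_unique (card_erase6 2) (f := ![0,1,3,4,5]) (by decide) (by decide)]
  have hv3 : pentVert ((univ : Finset (Fin 6)).erase 3) (card_erase6 3) = ![0,1,2,4,5] := by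
    funext i; rw [pentVert, Finset.orderEmbOfFin_unique (card_erase6 3) (f := ![0,1,2,4,5]) (by decide) (by decide)]
  have hv4 : pentVert ((univ : Finset (Fin 6)).erase 4) (card_erase6 4) = ![0,1,2,3,5] := by
    funext i; rw [pentVert, Finset.orderEmbOfFin_unique (card_erase6 4) (f := ![0,1,2,3,5]) (by decide) (by decide)]
  have hv5 : pentVert ((univ : Finset (Fin 6)).erase 5) (card_erase6 5) = ![0,1,2,3,4] := by
    funext i; rw [pentVert, Finset.orderEmbOfFin_unique (card_erase6 5) (f := ![0,1,2,3,4]) (by decide) (by decide)]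
  have hf00 : pentFace ((univ : Finset (Fin 6)).erase 0) (card_erase6 0) 0 = ({2,3,4,5} : Finset (Fin 6)) := by
    rw [pentFace, hv0]; decide
  have hf01 : pentFace ((univ : Finset (Fin 6)).erase 0) (card_erase6 0) 1 = ({1,3,4,5} : Finset (Fin 6)) := by
    rw [pentFace, hv0]; decide
  have hf02 : pentFace ((univ : Finset (Fin 6)).erase 0) (card_erase6 0) 2 = ({1,2,4,5} : Finset (Fin 6)) := by
    rw [pentFace, hv0]; decide
  have hf03 : pentFace ((univ : Finset (Fin 6)).erase 0) (card_erase6 0) 3 = ({1,2,3,5} : Finset (Fin 6)) := by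
    rw [pentFace, hv0]; decide
  have hf04 : pentFace ((univ : Finset (Fin 6)).erase 0) (card_erase6 0) 4 = ({1,2,3,4} : Finset (Fin 6)) := by
    rw [pentFace, hv0]; decide
  have hf10 : pentFace ((univ : Finset (Fin 6)).erase 1) (card_erase6 1) 0 = ({2,3,4,5} : Finset (Fin 6)) := by
    rw [pentFace, hv1]; decide
  have hf11 : pentFace ((univ : Finset (Fin 6)).erase 1) (card_erase6 1) 1 = ({0,3,4,5} : Finset (Fin 6)) := by
    rw [pentFace, hv1]; decide
  have hf12 : pentFace ((univ : Finset (Fin 6)).erase 1) (card_erase6 1) 2 = ({0,2,4,5} : Finset (Fin 6)) := by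
    rw [pentFace, hv1]; decide
  have hf13 : pentFace ((univ : Finset (Fin 6)).erase 1) (card_erase6 1) 3 = ({0,2,3,5} : Finset (Fin 6)) := by
    rw [pentFace, hv1]; decide
  have hf14 : pentFace ((univ : Finset (Fin 6)).erase 1) (card_erase6 1) 4 = ({0,2,3,4} : Finset (Fin 6)) := by
    rw [pentFace, hv1]; decide
  have hf20 : pentFace ((univ : Finset (Fin 6)).erase 2) (card_erase6 2) 0 = ({1,3,4,5} : Finset (Fin 6)) := by
    rw [pentFace, hv2]; decide
  have hf21 : pentFace ((univ : Finset (Fin 6)).erase 2) (card_erase6 2) 1 = ({0,3,4,5} : Finset (Fin 6)) := by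
    rw [pentFace, hv2]; decide
  have hf22 : pentFace ((univ : Finset (Fin 6)).erase 2) (card_erase6 2) 2 = ({0,1,4,5} : Finset (Fin 6)) := by
    rw [pentFace, hv2]; decide
  have hf23 : pentFace ((univ : Finset (Fin 6)).erase 2) (card_erase6 2) 3 = ({0,1,3,5} : Finset (Fin 6)) := by
    rw [pentFace, hv2]; decide
  have hf24 : pentFace ((univ : Finset (Fin 6)).erase 2) (card_erase6 2) 4 = ({0,1,3,4} : Finset (Fin 6)) := by
    rw [pentFace, hv2]; decide
  have hf30 : pentFace ((univ : Finset (Fin 6)).erase 3) (card_erase6 3) 0 = ({1,2,4,5} : Finset (Fin 6)) := by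
    rw [pentFace, hv3]; decide
  have hf31 : pentFace ((univ : Finset (Fin 6)).erase 3) (card_erase6 3) 1 = ({0,2,4,5} : Finset (Fin 6)) := by
    rw [pentFace, hv3]; decide
  have hf32 : pentFace ((univ : Finset (Fin 6)).erase 3) (card_erase6 3) 2 = ({0,1,4,5} : Finset (Fin 6)) := by
    rw [pentFace, hv3]; decide
  have hf33 : pentFace ((univ : Finset (Fin 6)).erase 3) (card_erase6 3) 3 = ({0,1,2,5} : Finset (Fin 6)) := by
    rw [pentFace, hv3]; decide
  have hf34 : pentFace ((univ : Finset (Fin 6)).erase 3) (card_erase6 3) 4 = ({0,1,2,4} : Finset (Fin 6)) := by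
    rw [pentFace, hv3]; decide
  have hf40 : pentFace ((univ : Finset (Fin 6)).erase 4) (card_erase6 4) 0 = ({1,2,3,5} : Finset (Fin 6)) := by
    rw [pentFace, hv4]; decide
  have hf41 : pentFace ((univ : Finset (Fin 6)).erase 4) (card_erase6 4) 1 = ({0,2,3,5} : Finset (Fin 6)) := by
    rw [pentFace, hv4]; decide
  have hf42 : pentFace ((univ : Finset (Fin 6)).erase 4) (card_erase6 4) 2 = ({0,1,3,5} : Finset (Fin 6)) := by
    rw [pentFace, hv4]; decide
  have hf43 : pentFace ((univ : Finset (Fin 6)).erase 4) (card_erase6 4) 3 = ({0,1,2,5} : Finset (Fin 6)) := by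
    rw [pentFace, hv4]; decide
  have hf44 : pentFace ((univ : Finset (Fin 6)).erase 4) (card_erase6 4) 4 = ({0,1,2,3} : Finset (Fin 6)) := by
    rw [pentFace, hv4]; decide
  have hf50 : pentFace ((univ : Finset (Fin 6)).erase 5) (card_erase6 5) 0 = ({1,2,3,4} : Finset (Fin 6)) := by
    rw [pentFace, hv5]; decide
  have hf51 : pentFace ((univ : Finset (Fin 6)).erase 5) (card_erase6 5) 1 = ({0,2,3,4} : Finset (Fin 6)) := by
    rw [pentFace, hv5]; decide
  have hf52 : pentFace ((univ : Finset (Fin 6)).erase 5) (card_erase6 5) 2 = ({0,1,3,4} : Finset (Fin 6)) := by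
    rw [pentFace, hv5]; decide
  have hf53 : pentFace ((univ : Finset (Fin 6)).erase 5) (card_erase6 5) 3 = ({0,1,2,4} : Finset (Fin 6)) := by
    rw [pentFace, hv5]; decide
  have hf54 : pentFace ((univ : Finset (Fin 6)).erase 5) (card_erase6 5) 4 = ({0,1,2,3} : Finset (Fin 6)) := by
    rw [pentFace, hv5]; decide
  have hR00 : ((Rmat 0 0 : ℤ) : F) = (0 : F) := by
    rw [show (Rmat 0 0 : ℤ) = (0:ℤ) from rfl]; push_cast; ring
  have hR01 : ((Rmat 0 1 : ℤ) : F) = (-2 : F) := by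
    rw [show (Rmat 0 1 : ℤ) = (-2:ℤ) from rfl]; push_cast; ring
  have hR02 : ((Rmat 0 2 : ℤ) : F) = (1 : F) := by
    rw [show (Rmat 0 2 : ℤ) = (1:ℤ) from rfl]; push_cast; ring
  have hR03 : ((Rmat 0 3 : ℤ) : F) = (1 : F) := by
    rw [show (Rmat 0 3 : ℤ) = (1:ℤ) from rfl]; push_cast; ring
  have hR04 : ((Rmat 0 4 : ℤ) : F) = (-2 : F) := by
    rw [show (Rmat 0 4 : ℤ) = (-2:ℤ) from rfl]; push_cast; ring
  have hR10 : ((Rmat 1 0 : ℤ) : F) = (0 : F) := by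
    rw [show (Rmat 1 0 : ℤ) = (0:ℤ) from rfl]; push_cast; ring
  have hR11 : ((Rmat 1 1 : ℤ) : F) = (-1 : F) := by
    rw [show (Rmat 1 1 : ℤ) = (-1:ℤ) from rfl]; push_cast; ring
  have hR12 : ((Rmat 1 2 : ℤ) : F) = (0 : F) := by
    rw [show (Rmat 1 2 : ℤ) = (0:ℤ) from rfl]; push_cast; ring
  have hR13 : ((Rmat 1 3 : ℤ) : F) = (1 : F) := by
    rw [show (Rmat 1 3 : ℤ) = (1:ℤ) from rfl]; push_cast; ring
  have hR14 : ((Rmat 1 4 : ℤ) : F) = (-1 : F) := by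
    rw [show (Rmat 1 4 : ℤ) = (-1:ℤ) from rfl]; push_cast; ring
  have hR20 : ((Rmat 2 0 : ℤ) : F) = (-1 : F) := by
    rw [show (Rmat 2 0 : ℤ) = (-1:ℤ) from rfl]; push_cast; ring
  have hR21 : ((Rmat 2 1 : ℤ) : F) = (2 : F) := by
    rw [show (Rmat 2 1 : ℤ) = (2:ℤ) from rfl]; push_cast; ring
  have hR22 : ((Rmat 2 2 : ℤ) : F) = (-2 : F) := by
    rw [show (Rmat 2 2 : ℤ) = (-2:ℤ) from rfl]; push_cast; ring
  have hR23 : ((Rmat 2 3 : ℤ) : F) = (0 : F) := by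
    rw [show (Rmat 2 3 : ℤ) = (0:ℤ) from rfl]; push_cast; ring
  have hR24 : ((Rmat 2 4 : ℤ) : F) = (1 : F) := by
    rw [show (Rmat 2 4 : ℤ) = (1:ℤ) from rfl]; push_cast; ring
  have hR30 : ((Rmat 3 0 : ℤ) : F) = (-1 : F) := by
    rw [show (Rmat 3 0 : ℤ) = (-1:ℤ) from rfl]; push_cast; ring
  have hR31 : ((Rmat 3 1 : ℤ) : F) = (3 : F) := by
    rw [show (Rmat 3 1 : ℤ) = (3:ℤ) from rfl]; push_cast; ring
  have hR32 : ((Rmat 3 2 : ℤ) : F) = (-2 : F) := by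
    rw [show (Rmat 3 2 : ℤ) = (-2:ℤ) from rfl]; push_cast; ring
  have hR33 : ((Rmat 3 3 : ℤ) : F) = (-1 : F) := by
    rw [show (Rmat 3 3 : ℤ) = (-1:ℤ) from rfl]; push_cast; ring
  have hR34 : ((Rmat 3 4 : ℤ) : F) = (2 : F) := by
    rw [show (Rmat 3 4 : ℤ) = (2:ℤ) from rfl]; push_cast; ring
  have hR40 : ((Rmat 4 0 : ℤ) : F) = (0 : F) := by
    rw [show (Rmat 4 0 : ℤ) = (0:ℤ) from rfl]; push_cast; ring
  have hR41 : ((Rmat 4 1 : ℤ) : F) = (1 : F) := by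
    rw [show (Rmat 4 1 : ℤ) = (1:ℤ) from rfl]; push_cast; ring
  have hR42 : ((Rmat 4 2 : ℤ) : F) = (-1 : F) := by
    rw [show (Rmat 4 2 : ℤ) = (-1:ℤ) from rfl]; push_cast; ring
  have hR43 : ((Rmat 4 3 : ℤ) : F) = (0 : F) := by
    rw [show (Rmat 4 3 : ℤ) = (0:ℤ) from rfl]; push_cast; ring
  have hR44 : ((Rmat 4 4 : ℤ) : F) = (0 : F) := by
    rw [show (Rmat 4 4 : ℤ) = (0:ℤ) from rfl]; push_cast; ring
  have Ha01 := hχ ((univ : Finset (Fin 6)).erase 0) (card_erase6 0) 0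
  have Hb01 := hχ ((univ : Finset (Fin 6)).erase 1) (card_erase6 1) 0
  have Ha02 := hχ ((univ : Finset (Fin 6)).erase 0) (card_erase6 0) 1
  have Hb02 := hχ ((univ : Finset (Fin 6)).erase 2) (card_erase6 2) 0
  have Ha03 := hχ ((univ : Finset (Fin 6)).erase 0) (card_erase6 0) 2
  have Hb03 := hχ ((univ : Finset (Fin 6)).erase 3) (card_erase6 3) 0
  have Ha05 := hχ ((univ : Finset (Fin 6)).erase 0) (card_erase6 0) 4
  have Hb05 := hχ ((univ : Finset (Fin 6)).erase 5) (card_erase6 5) 0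
  have Ha12 := hχ ((univ : Finset (Fin 6)).erase 1) (card_erase6 1) 1
  have Hb12 := hχ ((univ : Finset (Fin 6)).erase 2) (card_erase6 2) 1
  have Ha14 := hχ ((univ : Finset (Fin 6)).erase 1) (card_erase6 1) 3
  have Hb14 := hχ ((univ : Finset (Fin 6)).erase 4) (card_erase6 4) 1
  simp only [Fin.sum_univ_five, Fin.isValue, hf00,hf01,hf02,hf03,hf04,hf10,hf11,hf12,hf13,hf14,hf20,hf21,hf22,hf23,hf24,hf30,hf31,hf32,hf33,hf34,hf40,hf41,hf42,hf43,hf44,hf50,hf51,hf52,hf53,hf54, hR00,hR01,hR02,hR03,hR04,hR10,hR11,hR12,hR13,hR14,hR20,hR21,hR22,hR23,hR24,hR30,hR31,hR32,hR33,hR34,hR40,hR41,hR42,hR43,hR44] at Ha01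
  simp only [Fin.sum_univ_five, Fin.isValue, hf00,hf01,hf02,hf03,hf04,hf10,hf11,hf12,hf13,hf14,hf20,hf21,hf22,hf23,hf24,hf30,hf31,hf32,hf33,hf34,hf40,hf41,hf42,hf43,hf44,hf50,hf51,hf52,hf53,hf54, hR00,hR01,hR02,hR03,hR04,hR10,hR11,hR12,hR13,hR14,hR20,hR21,hR22,hR23,hR24,hR30,hR31,hR32,hR33,hR34,hR40,hR41,hR42,hR43,hR44] at Hb01
  simp only [Fin.sum_univ_five, Fin.isValue, hf00,hf01,hf02,hf03,hf04,hf10,hf11,hf12,hf13,hf14,hf20,hf21,hf22,hf23,hf24,hf30,hf31,hf32,hf33,hf34,hf40,hf41,hf42,hf43,hf44,hf50,hf51,hf52,hf53,hf54, hR00,hR01,hR02,hR03,hR04,hR10,hR11,hR12,hR13,hR14,hR20,hR21,hR22,hR23,hR24,hR30,hR31,hR32,hR33,hR34,hR40,hR41,hR42,hR43,hR44] at Ha02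
  simp only [Fin.sum_univ_five, Fin.isValue, hf00,hf01,hf02,hf03,hf04,hf10,hf11,hf12,hf13,hf14,hf20,hf21,hf22,hf23,hf24,hf30,hf31,hf32,hf33,hf34,hf40,hf41,hf42,hf43,hf44,hf50,hf51,hf52,hf53,hf54, hR00,hR01,hR02,hR03,hR04,hR10,hR11,hR12,hR13,hR14,hR20,hR21,hR22,hR23,hR24,hR30,hR31,hR32,hR33,hR34,hR40,hR41,hR42,hR43,hR44] at Hb02
  simp only [Fin.sum_univ_five, Fin.isValue, hf00,hf01,hf02,hf03,hf04,hf10,hf11,hf12,hf13,hf14,hf20,hf21,hf22,hf23,hf24,hf30,hf31,hf32,hf33,hf34,hf40,hf41,hf42,hf43,hf44,hf50,hf51,hf52,hf53,hf54, hR00,hR01,hR02,hR03,hR04,hR10,hR11,hR12,hR13,hR14,hR20,hR21,hR22,hR23,hR24,hR30,hR31,hR32,hR33,hR34,hR40,hR41,hR42,hR43,hR44] at Ha03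
  simp only [Fin.sum_univ_five, Fin.isValue, hf00,hf01,hf02,hf03,hf04,hf10,hf11,hf12,hf13,hf14,hf20,hf21,hf22,hf23,hf24,hf30,hf31,hf32,hf33,hf34,hf40,hf41,hf42,hf43,hf44,hf50,hf51,hf52,hf53,hf54, hR00,hR01,hR02,hR03,hR04,hR10,hR11,hR12,hR13,hR14,hR20,hR21,hR22,hR23,hR24,hR30,hR31,hR32,hR33,hR34,hR40,hR41,hR42,hR43,hR44] at Hb03
  simp only [Fin.sum_univ_five, Fin.isValue, hf00,hf01,hf02,hf03,hf04,hf10,hf11,hf12,hf13,hf14,hf20,hf21,hf22,hf23,hf24,hf30,hf31,hf32,hf33,hf34,hf40,hf41,hf42,hf43,hf44,hf50,hf51,hf52,hf53,hf54, hR00,hR01,hR02,hR03,hR04,hR10,hR11,hR12,hR13,hR14,hR20,hR21,hR22,hR23,hR24,hR30,hR31,hR32,hR33,hR34,hR40,hR41,hR42,hR43,hR44] at Ha05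
  simp only [Fin.sum_univ_five, Fin.isValue, hf00,hf01,hf02,hf03,hf04,hf10,hf11,hf12,hf13,hf14,hf20,hf21,hf22,hf23,hf24,hf30,hf31,hf32,hf33,hf34,hf40,hf41,hf42,hf43,hf44,hf50,hf51,hf52,hf53,hf54, hR00,hR01,hR02,hR03,hR04,hR10,hR11,hR12,hR13,hR14,hR20,hR21,hR22,hR23,hR24,hR30,hR31,hR32,hR33,hR34,hR40,hR41,hR42,hR43,hR44] at Hb05
  simp only [Fin.sum_univ_five, Fin.isValue, hf00,hf01,hf02,hf03,hf04,hf10,hf11,hf12,hf13,hf14,hf20,hf21,hf22,hf23,hf24,hf30,hf31,hf32,hf33,hf34,hf40,hf41,hf42,hf43,hf44,hf50,hf51,hf52,hf53,hf54, hR00,hR01,hR02,hR03,hR04,hR10,hR11,hR12,hR13,hR14,hR20,hR21,hR22,hR23,hR24,hR30,hR31,hR32,hR33,hR34,hR40,hR41,hR42,hR43,hR44] at Ha12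
  simp only [Fin.sum_univ_five, Fin.isValue, hf00,hf01,hf02,hf03,hf04,hf10,hf11,hf12,hf13,hf14,hf20,hf21,hf22,hf23,hf24,hf30,hf31,hf32,hf33,hf34,hf40,hf41,hf42,hf43,hf44,hf50,hf51,hf52,hf53,hf54, hR00,hR01,hR02,hR03,hR04,hR10,hR11,hR12,hR13,hR14,hR20,hR21,hR22,hR23,hR24,hR30,hR31,hR32,hR33,hR34,hR40,hR41,hR42,hR43,hR44] at Hb12
  simp only [Fin.sum_univ_five, Fin.isValue, hf00,hf01,hf02,hf03,hf04,hf10,hf11,hf12,hf13,hf14,hf20,hf21,hf22,hf23,hf24,hf30,hf31,hf32,hf33,hf34,hf40,hf41,hf42,hf43,hf44,hf50,hf51,hf52,hf53,hf54, hR00,hR01,hR02,hR03,hR04,hR10,hR11,hR12,hR13,hR14,hR20,hR21,hR22,hR23,hR24,hR30,hR31,hR32,hR33,hR34,hR40,hR41,hR42,hR43,hR44] at Ha14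
  simp only [Fin.sum_univ_five, Fin.isValue, hf00,hf01,hf02,hf03,hf04,hf10,hf11,hf12,hf13,hf14,hf20,hf21,hf22,hf23,hf24,hf30,hf31,hf32,hf33,hf34,hf40,hf41,hf42,hf43,hf44,hf50,hf51,hf52,hf53,hf54, hR00,hR01,hR02,hR03,hR04,hR10,hR11,hR12,hR13,hR14,hR20,hR21,hR22,hR23,hR24,hR30,hR31,hR32,hR33,hR34,hR40,hR41,hR42,hR43,hR44] at Hb14
  simp only [Fin.sum_univ_six, xv, Fin.isValue, hf00,hf01,hf02,hf03,hf04,hf10,hf11,hf12,hf13,hf14,hf20,hf21,hf22,hf23,hf24,hf30,hf31,hf32,hf33,hf34,hf40,hf41,hf42,hf43,hf44,hf50,hf51,hf52,hf53,hf54, Fin.val_zero, Fin.val_one,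
    CharTwo.neg_eq, one_pow, one_mul]
  set x01 : F := (χ ({2,3,4,5} : Finset (Fin 6))).1 with hdefx01
  set x02 : F := (χ ({1,3,4,5} : Finset (Fin 6))).1 with hdefx02
  set x03 : F := (χ ({1,2,4,5} : Finset (Fin 6))).1 with hdefx03
  set x04 : F := (χ ({1,2,3,5} : Finset (Fin 6))).1 with hdefx04
  set x05 : F := (χ ({1,2,3,4} : Finset (Fin 6))).1 with hdefx05
  set x12 : F := (χ ({0,3,4,5} : Finset (Fin 6))).1 with hdefx12
  set x13 : F := (χ ({0,2,4,5} : Finset (Fin 6))).1 with hdefx13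
  set x14 : F := (χ ({0,2,3,5} : Finset (Fin 6))).1 with hdefx14
  set x15 : F := (χ ({0,2,3,4} : Finset (Fin 6))).1 with hdefx15
  set x23 : F := (χ ({0,1,4,5} : Finset (Fin 6))).1 with hdefx23
  set x24 : F := (χ ({0,1,3,5} : Finset (Fin 6))).1 with hdefx24
  set x25 : F := (χ ({0,1,3,4} : Finset (Fin 6))).1 with hdefx25
  set x34 : F := (χ ({0,1,2,5} : Finset (Fin 6))).1 with hdefx34
  set x35 : F := (χ ({0,1,2,4} : Finset (Fin 6))).1 with hdefx35
  set x45 : F := (χ ({0,1,2,3} : Finset (Fin 6))).1 with hdefx45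
  linear_combination x01 * (Ha01 - Hb01) + x02 * (Ha01 - Hb01) + x05 * (Ha01 - Hb01) + x12 * (Ha01 - Hb01) + x13 * (Ha01 - Hb01) + x15 * (Ha01 - Hb01) + x24 * (Ha01 - Hb01) + x34 * (Ha01 - Hb01) + x01 * (Ha02 - Hb02) + x03 * (Ha02 - Hb02) + x12 * (Ha02 - Hb02) + x13 * (Ha02 - Hb02) + x24 * (Ha02 - Hb02) + x25 * (Ha02 - Hb02) + x34 * (Ha02 - Hb02) + x45 * (Ha02 - Hb02) + x01 * (Ha03 - Hb03) + x02 * (Ha03 - Hb03) + x35 * (Ha03 - Hb03) + x45 * (Ha03 - Hb03) + x01 * (Ha05 - Hb05) + x03 * (Ha05 - Hb05) + x05 * (Ha05 - Hb05) + x15 * (Ha05 - Hb05) + x25 * (Ha05 - Hb05) + x45 * (Ha05 - Hb05) + x01 * (Ha12 - Hb12) + x02 * (Ha12 - Hb12) + x04 * (Ha12 - Hb12) + x05 * (Ha12 - Hb12) + x01 * (Ha14 - Hb14) + x03 * (Ha14 - Hb14) + x05 * (Ha14 - Hb14) + ((-1:F)*x01*x01 + (-1:F)*x01*x03 + (1:F)*x01*x04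 + (-1:F)*x01*x05 + (4:F)*x01*x12 + (3:F)*x01*x15 + (-1:F)*x01*x23 + (-1:F)*x01*x24 + (1:F)*x01*x25 + (-1:F)*x01*x34 + (1:F)*x01*x45 + (1:F)*x02*x04 + (-1:F)*x02*x05 + (-1:F)*x02*x13 + (-2:F)*x02*x24 + (1:F)*x02*x25 + (-2:F)*x02*x34 + (2:F)*x02*x35 + (1:F)*x02*x45 + (1:F)*x03*x04 + (3:F)*x03*x12 + (2:F)*x03*x15 + (-1:F)*x03*x35 + (1:F)*x04*x05 + (1:F)*x04*x12 + (1:F)*x04*x13 + (1:F)*x04*x14 + (1:F)*x04*x24 + (1:F)*x04*x25 + (1:F)*x04*x34 + (1:F)*x04*x45 + (-1:F)*x05*x05 + (1:F)*x05*x12 + (-3:F)*x05*x13 + (2:F)*x05*x15 + (-2:F)*x05*x24 + (-2:F)*x05*x34 + (2:F)*x05*x45 + (2:F)*x12*x12 + (2:F)*x12*x13 + (2:F)*x12*x15 + (2:F)*x12*x24 + (2:F)*x12*x25 + (2:F)*x12*x34 + (1:F)*x12*x45 + (1:F)*x13*x15 + (-1:F)*x13*x24 + (1:F)*x13*x25 +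 (1:F)*x13*x35 + (1:F)*x13*x45 + (2:F)*x15*x15 + (1:F)*x15*x24 + (1:F)*x15*x25 + (1:F)*x15*x34 + (2:F)*x15*x45 + (1:F)*x23*x23 + (-1:F)*x23*x45 + (1:F)*x24*x25 + (1:F)*x25*x25 + (1:F)*x25*x34 + (2:F)*x25*x45 + (1:F)*x35*x35 + (1:F)*x35*x45 + (1:F)*x45*x45) * h2
end

section
/- Let F be a field of characteristic 2. For every permitted coloring of ∂Δ⁵, the cocycle sum of the polynomial c(a,b,c,d,e) = de²+ce²+ae²+c²d+b²d+c³+ac²+b²c+ab² vanishes: Σ_{i=1}^{6} (−1)^{i−1} c[u_i] = 0 in F, where u_i = {1,…,6}∖{i}. -/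
open Finset

set_option maxHeartbeats 8000000 in
set_option maxRecDepth 100000 in
/-- char 2: the cocycle sum of de²+ce²+ae²+c²d+b²d+c³+ac²+b²c+ab² over a permitted coloring of ∂Δ⁵ vanishes. -/
theorem statement12 (F : Type*) [Field F] [CharP F 2]
    (χ : Finset (Fin 6) → F × F) (hχ : Permitted χ) :
    ∑ i : Fin 6, (-1 : F) ^ (i : ℕ) *
      (let a := xv F χ i 0; let b := xv F χ i 1; let c := xv F χ i 2;
       let d := xv F χ i 3; let e := xv F χ i 4;
       d*e^2 + c*e^2 + a*e^2 + c^2*d + b^2*d + c^3 + a*c^2 + b^2*c + a*b^2) = 0 := by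
  
  have V0 : ∀ j : Fin 5, pentVert ((univ:Finset (Fin 6)).erase 0) (card_erase6 0) j = ![1,2,3,4,5] j :=
    fun j => (congrFun (Finset.orderEmbOfFin_unique (card_erase6 0) (f := ![1,2,3,4,5]) (by decide) (by decide)) j).symm
  have F0 : ∀ j : Fin 5, pentFace ((univ:Finset (Fin 6)).erase 0) (card_erase6 0) j =
      (![{2,3,4,5},{1,3,4,5},{1,2,4,5},{1,2,3,5},{1,2,3,4}] : Fin 5 → Finset (Fin 6)) j := by
    intro j
    unfold pentFace
    rw [V0]
    fin_cases j <;> decide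
  have V1 : ∀ j : Fin 5, pentVert ((univ:Finset (Fin 6)).erase 1) (card_erase6 1) j = ![0,2,3,4,5] j :=
    fun j => (congrFun (Finset.orderEmbOfFin_unique (card_erase6 1) (f := ![0,2,3,4,5]) (by decide) (by decide)) j).symm
  have F1 : ∀ j : Fin 5, pentFace ((univ:Finset (Fin 6)).erase 1) (card_erase6 1) j =
      (![{2,3,4,5},{0,3,4,5},{0,2,4,5},{0,2,3,5},{0,2,3,4}] : Fin 5 → Finset (Fin 6)) j := by
    intro j
    unfold pentFace
    rw [V1]
    fin_cases j <;> decide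
  have V2 : ∀ j : Fin 5, pentVert ((univ:Finset (Fin 6)).erase 2) (card_erase6 2) j = ![0,1,3,4,5] j :=
    fun j => (congrFun (Finset.orderEmbOfFin_unique (card_erase6 2) (f := ![0,1,3,4,5]) (by decide) (by decide)) j).symm
  have F2 : ∀ j : Fin 5, pentFace ((univ:Finset (Fin 6)).erase 2) (card_erase6 2) j =
      (![{1,3,4,5},{0,3,4,5},{0,1,4,5},{0,1,3,5},{0,1,3,4}] : Fin 5 → Finset (Fin 6)) j := by
    intro j
    unfold pentFace
    rw [V2]
    fin_cases j <;> decide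
  have V3 : ∀ j : Fin 5, pentVert ((univ:Finset (Fin 6)).erase 3) (card_erase6 3) j = ![0,1,2,4,5] j :=
    fun j => (congrFun (Finset.orderEmbOfFin_unique (card_erase6 3) (f := ![0,1,2,4,5]) (by decide) (by decide)) j).symm
  have F3 : ∀ j : Fin 5, pentFace ((univ:Finset (Fin 6)).erase 3) (card_erase6 3) j =
      (![{1,2,4,5},{0,2,4,5},{0,1,4,5},{0,1,2,5},{0,1,2,4}] : Fin 5 → Finset (Fin 6)) j := by
    intro j
    unfold pentFace
    rw [V3]
    fin_cases j <;> decide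
  have V4 : ∀ j : Fin 5, pentVert ((univ:Finset (Fin 6)).erase 4) (card_erase6 4) j = ![0,1,2,3,5] j :=
    fun j => (congrFun (Finset.orderEmbOfFin_unique (card_erase6 4) (f := ![0,1,2,3,5]) (by decide) (by decide)) j).symm
  have F4 : ∀ j : Fin 5, pentFace ((univ:Finset (Fin 6)).erase 4) (card_erase6 4) j =
      (![{1,2,3,5},{0,2,3,5},{0,1,3,5},{0,1,2,5},{0,1,2,3}] : Fin 5 → Finset (Fin 6)) j := by
    intro j
    unfold pentFace
    rw [V4]
    fin_cases j <;> decide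
  have V5 : ∀ j : Fin 5, pentVert ((univ:Finset (Fin 6)).erase 5) (card_erase6 5) j = ![0,1,2,3,4] j :=
    fun j => (congrFun (Finset.orderEmbOfFin_unique (card_erase6 5) (f := ![0,1,2,3,4]) (by decide) (by decide)) j).symm
  have F5 : ∀ j : Fin 5, pentFace ((univ:Finset (Fin 6)).erase 5) (card_erase6 5) j =
      (![{1,2,3,4},{0,2,3,4},{0,1,3,4},{0,1,2,4},{0,1,2,3}] : Fin 5 → Finset (Fin 6)) j := by
    intro j
    unfold pentFace
    rw [V5]
    fin_cases j <;> decide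
  have E0_0 := hχ ((univ:Finset (Fin 6)).erase 0) (card_erase6 0) 0
  rw [Fin.sum_univ_five] at E0_0
  norm_num [F0, Rmat, Matrix.cons_val_zero, Matrix.cons_val_one, Matrix.head_cons,
    Matrix.cons_val_two, Matrix.tail_cons, Matrix.cons_val_three, Matrix.cons_val_four] at E0_0
  have E0_1 := hχ ((univ:Finset (Fin 6)).erase 0) (card_erase6 0) 1
  rw [Fin.sum_univ_five] at E0_1
  norm_num [F0, Rmat, Matrix.cons_val_zero, Matrix.cons_val_one, Matrix.head_cons,
    Matrix.cons_val_two, Matrix.tail_cons, Matrix.cons_val_three, Matrix.cons_val_four] at E0_1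
  have E0_2 := hχ ((univ:Finset (Fin 6)).erase 0) (card_erase6 0) 2
  rw [Fin.sum_univ_five] at E0_2
  norm_num [F0, Rmat, Matrix.cons_val_zero, Matrix.cons_val_one, Matrix.head_cons,
    Matrix.cons_val_two, Matrix.tail_cons, Matrix.cons_val_three, Matrix.cons_val_four] at E0_2
  have E0_3 := hχ ((univ:Finset (Fin 6)).erase 0) (card_erase6 0) 3
  rw [Fin.sum_univ_five] at E0_3
  norm_num [F0, Rmat, Matrix.cons_val_zero, Matrix.cons_val_one, Matrix.head_cons,
    Matrix.cons_val_two, Matrix.tail_cons, Matrix.cons_val_three, Matrix.cons_val_four] at E0_3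
  have E0_4 := hχ ((univ:Finset (Fin 6)).erase 0) (card_erase6 0) 4
  rw [Fin.sum_univ_five] at E0_4
  norm_num [F0, Rmat, Matrix.cons_val_zero, Matrix.cons_val_one, Matrix.head_cons,
    Matrix.cons_val_two, Matrix.tail_cons, Matrix.cons_val_three, Matrix.cons_val_four] at E0_4
  have E1_0 := hχ ((univ:Finset (Fin 6)).erase 1) (card_erase6 1) 0
  rw [Fin.sum_univ_five] at E1_0
  norm_num [F1, Rmat, Matrix.cons_val_zero, Matrix.cons_val_one, Matrix.head_cons,
    Matrix.cons_val_two, Matrix.tail_cons, Matrix.cons_val_three, Matrix.cons_val_four] at E1_0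
  have E1_1 := hχ ((univ:Finset (Fin 6)).erase 1) (card_erase6 1) 1
  rw [Fin.sum_univ_five] at E1_1
  norm_num [F1, Rmat, Matrix.cons_val_zero, Matrix.cons_val_one, Matrix.head_cons,
    Matrix.cons_val_two, Matrix.tail_cons, Matrix.cons_val_three, Matrix.cons_val_four] at E1_1
  have E1_2 := hχ ((univ:Finset (Fin 6)).erase 1) (card_erase6 1) 2
  rw [Fin.sum_univ_five] at E1_2
  norm_num [F1, Rmat, Matrix.cons_val_zero, Matrix.cons_val_one, Matrix.head_cons,
    Matrix.cons_val_two, Matrix.tail_cons, Matrix.cons_val_three, Matrix.cons_val_four] at E1_2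
  have E1_3 := hχ ((univ:Finset (Fin 6)).erase 1) (card_erase6 1) 3
  rw [Fin.sum_univ_five] at E1_3
  norm_num [F1, Rmat, Matrix.cons_val_zero, Matrix.cons_val_one, Matrix.head_cons,
    Matrix.cons_val_two, Matrix.tail_cons, Matrix.cons_val_three, Matrix.cons_val_four] at E1_3
  have E1_4 := hχ ((univ:Finset (Fin 6)).erase 1) (card_erase6 1) 4
  rw [Fin.sum_univ_five] at E1_4
  norm_num [F1, Rmat, Matrix.cons_val_zero, Matrix.cons_val_one, Matrix.head_cons,
    Matrix.cons_val_two, Matrix.tail_cons, Matrix.cons_val_three, Matrix.cons_val_four] at E1_4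
  have E2_0 := hχ ((univ:Finset (Fin 6)).erase 2) (card_erase6 2) 0
  rw [Fin.sum_univ_five] at E2_0
  norm_num [F2, Rmat, Matrix.cons_val_zero, Matrix.cons_val_one, Matrix.head_cons,
    Matrix.cons_val_two, Matrix.tail_cons, Matrix.cons_val_three, Matrix.cons_val_four] at E2_0
  have E2_1 := hχ ((univ:Finset (Fin 6)).erase 2) (card_erase6 2) 1
  rw [Fin.sum_univ_five] at E2_1
  norm_num [F2, Rmat, Matrix.cons_val_zero, Matrix.cons_val_one, Matrix.head_cons,
    Matrix.cons_val_two, Matrix.tail_cons, Matrix.cons_val_three, Matrix.cons_val_four] at E2_1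
  have E2_2 := hχ ((univ:Finset (Fin 6)).erase 2) (card_erase6 2) 2
  rw [Fin.sum_univ_five] at E2_2
  norm_num [F2, Rmat, Matrix.cons_val_zero, Matrix.cons_val_one, Matrix.head_cons,
    Matrix.cons_val_two, Matrix.tail_cons, Matrix.cons_val_three, Matrix.cons_val_four] at E2_2
  have E2_3 := hχ ((univ:Finset (Fin 6)).erase 2) (card_erase6 2) 3
  rw [Fin.sum_univ_five] at E2_3
  norm_num [F2, Rmat, Matrix.cons_val_zero, Matrix.cons_val_one, Matrix.head_cons,
    Matrix.cons_val_two, Matrix.tail_cons, Matrix.cons_val_three, Matrix.cons_val_four] at E2_3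
  have E2_4 := hχ ((univ:Finset (Fin 6)).erase 2) (card_erase6 2) 4
  rw [Fin.sum_univ_five] at E2_4
  norm_num [F2, Rmat, Matrix.cons_val_zero, Matrix.cons_val_one, Matrix.head_cons,
    Matrix.cons_val_two, Matrix.tail_cons, Matrix.cons_val_three, Matrix.cons_val_four] at E2_4
  have E3_0 := hχ ((univ:Finset (Fin 6)).erase 3) (card_erase6 3) 0
  rw [Fin.sum_univ_five] at E3_0
  norm_num [F3, Rmat, Matrix.cons_val_zero, Matrix.cons_val_one, Matrix.head_cons,
    Matrix.cons_val_two, Matrix.tail_cons, Matrix.cons_val_three, Matrix.cons_val_four] at E3_0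
  have E3_1 := hχ ((univ:Finset (Fin 6)).erase 3) (card_erase6 3) 1
  rw [Fin.sum_univ_five] at E3_1
  norm_num [F3, Rmat, Matrix.cons_val_zero, Matrix.cons_val_one, Matrix.head_cons,
    Matrix.cons_val_two, Matrix.tail_cons, Matrix.cons_val_three, Matrix.cons_val_four] at E3_1
  have E3_2 := hχ ((univ:Finset (Fin 6)).erase 3) (card_erase6 3) 2
  rw [Fin.sum_univ_five] at E3_2
  norm_num [F3, Rmat, Matrix.cons_val_zero, Matrix.cons_val_one, Matrix.head_cons,
    Matrix.cons_val_two, Matrix.tail_cons, Matrix.cons_val_three, Matrix.cons_val_four] at E3_2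
  have E3_3 := hχ ((univ:Finset (Fin 6)).erase 3) (card_erase6 3) 3
  rw [Fin.sum_univ_five] at E3_3
  norm_num [F3, Rmat, Matrix.cons_val_zero, Matrix.cons_val_one, Matrix.head_cons,
    Matrix.cons_val_two, Matrix.tail_cons, Matrix.cons_val_three, Matrix.cons_val_four] at E3_3
  have E3_4 := hχ ((univ:Finset (Fin 6)).erase 3) (card_erase6 3) 4
  rw [Fin.sum_univ_five] at E3_4
  norm_num [F3, Rmat, Matrix.cons_val_zero, Matrix.cons_val_one, Matrix.head_cons,
    Matrix.cons_val_two, Matrix.tail_cons, Matrix.cons_val_three, Matrix.cons_val_four] at E3_4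
  have E4_0 := hχ ((univ:Finset (Fin 6)).erase 4) (card_erase6 4) 0
  rw [Fin.sum_univ_five] at E4_0
  norm_num [F4, Rmat, Matrix.cons_val_zero, Matrix.cons_val_one, Matrix.head_cons,
    Matrix.cons_val_two, Matrix.tail_cons, Matrix.cons_val_three, Matrix.cons_val_four] at E4_0
  have E4_1 := hχ ((univ:Finset (Fin 6)).erase 4) (card_erase6 4) 1
  rw [Fin.sum_univ_five] at E4_1
  norm_num [F4, Rmat, Matrix.cons_val_zero, Matrix.cons_val_one, Matrix.head_cons,
    Matrix.cons_val_two, Matrix.tail_cons, Matrix.cons_val_three, Matrix.cons_val_four] at E4_1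
  have E4_2 := hχ ((univ:Finset (Fin 6)).erase 4) (card_erase6 4) 2
  rw [Fin.sum_univ_five] at E4_2
  norm_num [F4, Rmat, Matrix.cons_val_zero, Matrix.cons_val_one, Matrix.head_cons,
    Matrix.cons_val_two, Matrix.tail_cons, Matrix.cons_val_three, Matrix.cons_val_four] at E4_2
  have E4_3 := hχ ((univ:Finset (Fin 6)).erase 4) (card_erase6 4) 3
  rw [Fin.sum_univ_five] at E4_3
  norm_num [F4, Rmat, Matrix.cons_val_zero, Matrix.cons_val_one, Matrix.head_cons,
    Matrix.cons_val_two, Matrix.tail_cons, Matrix.cons_val_three, Matrix.cons_val_four] at E4_3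
  have E4_4 := hχ ((univ:Finset (Fin 6)).erase 4) (card_erase6 4) 4
  rw [Fin.sum_univ_five] at E4_4
  norm_num [F4, Rmat, Matrix.cons_val_zero, Matrix.cons_val_one, Matrix.head_cons,
    Matrix.cons_val_two, Matrix.tail_cons, Matrix.cons_val_three, Matrix.cons_val_four] at E4_4
  have E5_0 := hχ ((univ:Finset (Fin 6)).erase 5) (card_erase6 5) 0
  rw [Fin.sum_univ_five] at E5_0
  norm_num [F5, Rmat, Matrix.cons_val_zero, Matrix.cons_val_one, Matrix.head_cons,
    Matrix.cons_val_two, Matrix.tail_cons, Matrix.cons_val_three, Matrix.cons_val_four] at E5_0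
  have E5_1 := hχ ((univ:Finset (Fin 6)).erase 5) (card_erase6 5) 1
  rw [Fin.sum_univ_five] at E5_1
  norm_num [F5, Rmat, Matrix.cons_val_zero, Matrix.cons_val_one, Matrix.head_cons,
    Matrix.cons_val_two, Matrix.tail_cons, Matrix.cons_val_three, Matrix.cons_val_four] at E5_1
  have E5_2 := hχ ((univ:Finset (Fin 6)).erase 5) (card_erase6 5) 2
  rw [Fin.sum_univ_five] at E5_2
  norm_num [F5, Rmat, Matrix.cons_val_zero, Matrix.cons_val_one, Matrix.head_cons,
    Matrix.cons_val_two, Matrix.tail_cons, Matrix.cons_val_three, Matrix.cons_val_four] at E5_2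
  have E5_3 := hχ ((univ:Finset (Fin 6)).erase 5) (card_erase6 5) 3
  rw [Fin.sum_univ_five] at E5_3
  norm_num [F5, Rmat, Matrix.cons_val_zero, Matrix.cons_val_one, Matrix.head_cons,
    Matrix.cons_val_two, Matrix.tail_cons, Matrix.cons_val_three, Matrix.cons_val_four] at E5_3
  have E5_4 := hχ ((univ:Finset (Fin 6)).erase 5) (card_erase6 5) 4
  rw [Fin.sum_univ_five] at E5_4
  norm_num [F5, Rmat, Matrix.cons_val_zero, Matrix.cons_val_one, Matrix.head_cons,
    Matrix.cons_val_two, Matrix.tail_cons, Matrix.cons_val_three, Matrix.cons_val_four] at E5_4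
  have hneg : (-1 : F) = 1 := CharTwo.neg_eq 1
  have h2 : (2 : F) = 0 := CharTwo.two_eq_zero
  simp only [Fin.sum_univ_six, xv, F0, F1, F2, F3, F4, F5, Matrix.cons_val_zero,
    Matrix.cons_val_one, Matrix.head_cons, Matrix.cons_val_two, Matrix.tail_cons,
    Matrix.cons_val_three, Matrix.cons_val_four, hneg, one_pow, one_mul,
    Fin.isValue, Fin.val_zero, Fin.val_one]
  set x0 := (χ ({0,1,2,3} : Finset (Fin 6))).1 with hx0
  set x1 := (χ ({0,1,2,4} : Finset (Fin 6))).1 with hx1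
  set x2 := (χ ({0,1,2,5} : Finset (Fin 6))).1 with hx2
  set x3 := (χ ({0,1,3,4} : Finset (Fin 6))).1 with hx3
  set x4 := (χ ({0,1,3,5} : Finset (Fin 6))).1 with hx4
  set x5 := (χ ({0,1,4,5} : Finset (Fin 6))).1 with hx5
  set x6 := (χ ({0,2,3,4} : Finset (Fin 6))).1 with hx6
  set x7 := (χ ({0,2,3,5} : Finset (Fin 6))).1 with hx7
  set x8 := (χ ({0,2,4,5} : Finset (Fin 6))).1 with hx8
  set x9 := (χ ({0,3,4,5} : Finset (Fin 6))).1 with hx9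
  set x10 := (χ ({1,2,3,4} : Finset (Fin 6))).1 with hx10
  set x11 := (χ ({1,2,3,5} : Finset (Fin 6))).1 with hx11
  set x12 := (χ ({1,2,4,5} : Finset (Fin 6))).1 with hx12
  set x13 := (χ ({1,3,4,5} : Finset (Fin 6))).1 with hx13
  set x14 := (χ ({2,3,4,5} : Finset (Fin 6))).1 with hx14
  linear_combination (norm := ring1) (x0*x0 + x0*x2 + x0*x5 + x0*x7 + x0*x8 + x0*x11 + x1*x2 + x1*x4 + x1*x7 + x1*x8 + x1*x10 + x1*x13 + x2*x3 + x2*x5 + x2*x9 + x2*x10 + x2*x12 + x2*x13 + x3*x3 + x3*x5 + x3*x10 + x3*x11 + x3*x12 + x4*x5 + x4*x6 + x4*x8 + x4*x10 + x5*x6 + x5*x8 + x5*x9 + x6*x7 + x6*x8 + x6*x11 + x6*x12 + x6*x13 + x7*x8 + x7*x9 + x8*x8 + x8*x9 + x8*x11 + x8*x12 + x8*x13 + x9*x11 + x11*x12 + x11*x13 + x12*x13 + x13*x13)*E0_0 - (x0*x0 + x0*x2 + x0*x5 + x0*x7 + x0*x8 + x0*x11 + x1*x2 + x1*x4 + x1*x7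 + x1*x8 + x1*x10 + x1*x13 + x2*x3 + x2*x5 + x2*x9 + x2*x10 + x2*x12 + x2*x13 + x3*x3 + x3*x5 + x3*x10 + x3*x11 + x3*x12 + x4*x5 + x4*x6 + x4*x8 + x4*x10 + x5*x6 + x5*x8 + x5*x9 + x6*x7 + x6*x8 + x6*x11 + x6*x12 + x6*x13 + x7*x8 + x7*x9 + x8*x8 + x8*x9 + x8*x11 + x8*x12 + x8*x13 + x9*x11 + x11*x12 + x11*x13 + x12*x13 + x13*x13)*E1_0 + (x0*x0 + x0*x2 + x0*x5 + x0*x7 + x0*x8 + x0*x11 + x1*x1 + x1*x3 + x1*x4 + x1*x6 + x1*x7 + x1*x10 + x1*x11 + x2*x5 + x2*x9 + x2*x10 + x3*x3 + x3*x5 + x3*x6 + x3*x8 + x3*x10 + x4*x5 + x4*x6 + x4*x8 + x4*x10 + x5*x6 + x5*x8 + x5*x9 + x6*x7 + x6*x8 + x6*x11 + x7*x8 + x7*x9 + x8*x9 + x8*x11 + x9*x9 + x9*x11 + x10*x10 + x12*x12 + x13*x13)*E0_1 - (x0*x0 + x0*x2 + x0*x5 + x0*x7 + x0*x8 + x0*x11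 + x1*x1 + x1*x3 + x1*x4 + x1*x6 + x1*x7 + x1*x10 + x1*x11 + x2*x5 + x2*x9 + x2*x10 + x3*x3 + x3*x5 + x3*x6 + x3*x8 + x3*x10 + x4*x5 + x4*x6 + x4*x8 + x4*x10 + x5*x6 + x5*x8 + x5*x9 + x6*x7 + x6*x8 + x6*x11 + x7*x8 + x7*x9 + x8*x9 + x8*x11 + x9*x9 + x9*x11 + x10*x10 + x12*x12 + x13*x13)*E2_0 + (x0*x2 + x0*x5 + x0*x7 + x0*x8 + x0*x11 + x1*x2 + x1*x5 + x1*x7 + x1*x8 + x1*x11 + x2*x6 + x2*x8 + x2*x9 + x5*x6 + x5*x8 + x5*x9 + x6*x6 + x6*x7 + x6*x8 + x6*x11 + x7*x8 + x7*x9 + x8*x9 + x8*x11 + x9*x9 + x9*x11 + x10*x10 + x12*x12 + x13*x13)*E0_2 - (x0*x2 + x0*x5 + x0*x7 + x0*x8 + x0*x11 + x1*x2 + x1*x5 + x1*x7 + x1*x8 + x1*x11 + x2*x6 + x2*x8 + x2*x9 + x5*x6 + x5*x8 + x5*x9 + x6*x6 + x6*x7 + x6*x8 + x6*x11 + x7*x8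 + x7*x9 + x8*x9 + x8*x11 + x9*x9 + x9*x11 + x10*x10 + x12*x12 + x13*x13)*E3_0 + (x0*x0 + x0*x2 + x0*x5 + x0*x7 + x0*x8 + x0*x11 + x1*x2 + x1*x3 + x1*x6 + x1*x7 + x1*x10 + x1*x11 + x1*x12 + x1*x13 + x2*x4 + x2*x5 + x2*x6 + x2*x8 + x2*x9 + x2*x10 + x2*x11 + x2*x13 + x3*x5 + x3*x6 + x3*x8 + x3*x10 + x4*x5 + x4*x10 + x4*x11 + x4*x12 + x5*x5 + x5*x6 + x5*x8 + x5*x9 + x6*x6 + x6*x7 + x6*x8 + x6*x11 + x6*x12 + x6*x13 + x7*x8 + x7*x9 + x8*x8 + x8*x9 + x8*x11 + x8*x12 + x8*x13 + x9*x11 + x10*x10 + x11*x11 + x11*x12 + x11*x13 + x12*x12 + x12*x13 + x13*x13)*E0_4 - (x0*x0 + x0*x2 + x0*x5 + x0*x7 + x0*x8 + x0*x11 + x1*x2 + x1*x3 + x1*x6 + x1*x7 + x1*x10 + x1*x11 + x1*x12 + x1*x13 + x2*x4 + x2*x5 + x2*x6 + x2*x8 + x2*x9 + x2*x10 + x2*x11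 + x2*x13 + x3*x5 + x3*x6 + x3*x8 + x3*x10 + x4*x5 + x4*x10 + x4*x11 + x4*x12 + x5*x5 + x5*x6 + x5*x8 + x5*x9 + x6*x6 + x6*x7 + x6*x8 + x6*x11 + x6*x12 + x6*x13 + x7*x8 + x7*x9 + x8*x8 + x8*x9 + x8*x11 + x8*x12 + x8*x13 + x9*x11 + x10*x10 + x11*x11 + x11*x12 + x11*x13 + x12*x12 + x12*x13 + x13*x13)*E5_0 + (x0*x2 + x0*x5 + x0*x7 + x0*x8 + x0*x11 + x1*x1 + x1*x2 + x1*x4 + x1*x7 + x1*x8 + x1*x10 + x1*x13 + x2*x4 + x2*x5 + x2*x6 + x2*x7 + x2*x9 + x2*x10 + x2*x12 + x2*x13 + x3*x3 + x3*x4 + x3*x5 + x3*x10 + x3*x12 + x4*x4 + x4*x5 + x4*x7 + x4*x8 + x4*x10 + x4*x11 + x5*x6 + x5*x8 + x5*x9 + x6*x7 + x6*x8 + x6*x12 + x6*x13 + x7*x8 + x7*x9 + x7*x11 + x8*x8 + x8*x9 + x8*x11 + x8*x12 + x8*x13 + x9*x11 + x11*x12 + x11*x13 + x12*x13 + x13*x13)*E1_1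 - (x0*x2 + x0*x5 + x0*x7 + x0*x8 + x0*x11 + x1*x1 + x1*x2 + x1*x4 + x1*x7 + x1*x8 + x1*x10 + x1*x13 + x2*x4 + x2*x5 + x2*x6 + x2*x7 + x2*x9 + x2*x10 + x2*x12 + x2*x13 + x3*x3 + x3*x4 + x3*x5 + x3*x10 + x3*x12 + x4*x4 + x4*x5 + x4*x7 + x4*x8 + x4*x10 + x4*x11 + x5*x6 + x5*x8 + x5*x9 + x6*x7 + x6*x8 + x6*x12 + x6*x13 + x7*x8 + x7*x9 + x7*x11 + x8*x8 + x8*x9 + x8*x11 + x8*x12 + x8*x13 + x9*x11 + x11*x12 + x11*x13 + x12*x13 + x13*x13)*E2_1 + (x0*x2 + x0*x5 + x0*x7 + x0*x8 + x0*x11 + x1*x2 + x1*x5 + x1*x7 + x1*x8 + x1*x11 + x2*x6 + x2*x8 + x2*x9 + x5*x6 + x5*x8 + x5*x9 + x6*x7 + x6*x8 + x6*x11 + x7*x8 + x7*x9 + x8*x8 + x8*x9 + x8*x11 + x9*x11)*E1_3 - (x0*x2 + x0*x5 + x0*x7 + x0*x8 + x0*x11 + x1*x2 + x1*x5 + x1*x7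 + x1*x8 + x1*x11 + x2*x6 + x2*x8 + x2*x9 + x5*x6 + x5*x8 + x5*x9 + x6*x7 + x6*x8 + x6*x11 + x7*x8 + x7*x9 + x8*x8 + x8*x9 + x8*x11 + x9*x11)*E4_1 + (x0*x0*x0 + (2)*x0*x0*x2 + x0*x0*x3 + x0*x0*x5 + (2)*x0*x0*x6 + x0*x0*x7 + x0*x0*x8 + (2)*x0*x0*x9 + (-1)*x0*x0*x10 + (3)*x0*x0*x11 + (-1)*x0*x0*x13 + (2)*x0*x1*x2 + x0*x1*x3 + x0*x1*x5 + x0*x1*x6 + (2)*x0*x1*x7 + x0*x1*x8 + x0*x1*x10 + (2)*x0*x1*x11 + x0*x1*x12 + x0*x1*x13 + (-1)*x0*x2*x2 + x0*x2*x3 + (-1)*x0*x2*x5 + (4)*x0*x2*x6 + (-1)*x0*x2*x7 + (5)*x0*x2*x9 + x0*x2*x11 + (-1)*x0*x2*x12 + x0*x2*x13 + (-1)*x0*x2*x14 + (2)*x0*x3*x5 + x0*x3*x6 + x0*x3*x7 + (2)*x0*x3*x8 + x0*x3*x10 + x0*x3*x11 + (-1)*x0*x4*x7 + (-1)*x0*x4*x8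 + x0*x4*x10 + x0*x4*x12 + (4)*x0*x5*x6 + (-1)*x0*x5*x7 + (5)*x0*x5*x9 + (-1)*x0*x5*x10 + (-1)*x0*x5*x12 + (-1)*x0*x5*x14 + x0*x6*x6 + (4)*x0*x6*x7 + (4)*x0*x6*x8 + (4)*x0*x6*x11 + x0*x6*x12 + x0*x6*x13 + x0*x7*x8 + (5)*x0*x7*x9 + (-1)*x0*x7*x10 + x0*x7*x11 + (-1)*x0*x7*x12 + (-1)*x0*x7*x14 + x0*x8*x8 + (5)*x0*x8*x9 + (-1)*x0*x8*x10 + (2)*x0*x8*x11 + x0*x8*x13 + (-1)*x0*x8*x14 + (5)*x0*x9*x11 + x0*x10*x10 + (-1)*x0*x10*x11 + (2)*x0*x11*x11 + x0*x11*x13 + (-1)*x0*x11*x14 + x0*x12*x12 + x0*x12*x13 + x0*x13*x13 + x1*x1*x2 + x1*x1*x3 + (-1)*x1*x1*x4 + x1*x1*x5 + (-1)*x1*x1*x6 + x1*x1*x7 + x1*x1*x8 + x1*x1*x9 + (-1)*x1*x1*x10 + x1*x1*x11 + (-1)*x1*x1*x13 + (-1)*x1*x2*x2 + (-1)*x1*x2*x4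 + (-2)*x1*x2*x5 + (3)*x1*x2*x6 + (-1)*x1*x2*x7 + (-1)*x1*x2*x8 + (3)*x1*x2*x9 + (-1)*x1*x2*x10 + (-1)*x1*x2*x11 + (-1)*x1*x2*x12 + (-1)*x1*x2*x14 + x1*x3*x3 + x1*x3*x4 + (-1)*x1*x3*x5 + x1*x3*x6 + x1*x3*x7 + x1*x3*x9 + x1*x3*x11 + (-1)*x1*x3*x12 + (-1)*x1*x4*x4 + (-1)*x1*x4*x5 + (-1)*x1*x4*x7 + (-1)*x1*x4*x8 + (2)*x1*x4*x9 + (-3)*x1*x4*x10 + (-2)*x1*x4*x13 + (-1)*x1*x5*x5 + x1*x5*x6 + (-1)*x1*x5*x7 + (2)*x1*x5*x9 + (-1)*x1*x5*x11 + (-1)*x1*x5*x12 + x1*x5*x13 + (-1)*x1*x5*x14 + (2)*x1*x6*x6 + (3)*x1*x6*x7 + (2)*x1*x6*x8 + x1*x6*x9 + x1*x6*x10 + (3)*x1*x6*x11 + x1*x6*x13 + (4)*x1*x7*x9 + (-1)*x1*x7*x10 + x1*x7*x11 + (-1)*x1*x7*x12 + (-1)*x1*x7*x14 + (-1)*x1*x8*x8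 + (3)*x1*x8*x9 + (-1)*x1*x8*x10 + x1*x8*x11 + (-1)*x1*x8*x12 + (-1)*x1*x8*x13 + (-1)*x1*x8*x14 + x1*x9*x9 + (2)*x1*x9*x10 + (3)*x1*x9*x11 + x1*x9*x13 + (-1)*x1*x10*x10 + x1*x10*x11 + (-2)*x1*x10*x13 + (-2)*x1*x11*x12 + x1*x11*x13 + (-1)*x1*x11*x14 + (-1)*x2*x2*x6 + (-1)*x2*x2*x8 + (-1)*x2*x2*x9 + x2*x3*x5 + x2*x3*x6 + (-1)*x2*x3*x8 + (2)*x2*x3*x9 + x2*x3*x12 + (-1)*x2*x3*x13 + (-1)*x2*x4*x5 + (-1)*x2*x4*x9 + (-1)*x2*x4*x10 + (-1)*x2*x4*x12 + (-2)*x2*x5*x8 + (-2)*x2*x5*x10 + x2*x5*x11 + (-1)*x2*x5*x13 + x2*x6*x6 + (-1)*x2*x6*x7 + x2*x6*x8 + (4)*x2*x6*x9 + (2)*x2*x6*x10 + (-1)*x2*x6*x12 + (3)*x2*x6*x13 + (-1)*x2*x6*x14 + x2*x7*x7 + (-1)*x2*x7*x8 + (-1)*x2*x7*x9 + (-1)*x2*x8*x11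 + (-2)*x2*x8*x12 + x2*x8*x13 + (-1)*x2*x8*x14 + (3)*x2*x9*x9 + x2*x9*x10 + x2*x9*x13 + (-1)*x2*x9*x14 + (-2)*x2*x10*x10 + x2*x10*x11 + (-1)*x2*x10*x12 + (-2)*x2*x10*x13 + x2*x11*x13 + (-1)*x2*x12*x13 + (-1)*x2*x13*x13 + (2)*x3*x3*x3 + x3*x3*x5 + x3*x3*x6 + (2)*x3*x3*x9 + x3*x3*x11 + x3*x3*x12 + (-1)*x3*x3*x13 + x3*x4*x7 + x3*x4*x8 + (-1)*x3*x4*x12 + (-1)*x3*x5*x5 + (2)*x3*x5*x6 + (3)*x3*x5*x9 + (-2)*x3*x5*x10 + x3*x5*x11 + (-1)*x3*x5*x13 + x3*x6*x6 + x3*x6*x7 + (2)*x3*x6*x8 + x3*x6*x9 + x3*x6*x10 + (2)*x3*x6*x11 + x3*x7*x8 + x3*x7*x9 + (2)*x3*x8*x9 + (-1)*x3*x8*x10 + x3*x8*x11 + (-1)*x3*x8*x12 + x3*x9*x9 + (2)*x3*x9*x10 + (2)*x3*x9*x11 + x3*x9*x12 + (-1)*x3*x10*x10 + (-1)*x3*x10*x12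 + (-1)*x3*x10*x13 + x3*x11*x12 + (-1)*x3*x11*x13 + x3*x12*x12 + (-1)*x3*x12*x13 + x3*x13*x13 + (-1)*x4*x4*x5 + (-1)*x4*x4*x6 + (-1)*x4*x4*x8 + (-1)*x4*x4*x10 + (-2)*x4*x5*x8 + x4*x5*x9 + (-2)*x4*x5*x10 + x4*x5*x11 + (-1)*x4*x5*x13 + x4*x6*x6 + (-2)*x4*x6*x7 + (-1)*x4*x6*x8 + (2)*x4*x6*x9 + x4*x6*x11 + x4*x6*x12 + (-2)*x4*x6*x13 + x4*x7*x7 + (-1)*x4*x7*x8 + (-1)*x4*x7*x9 + (-1)*x4*x8*x8 + x4*x8*x9 + (-2)*x4*x8*x10 + (-2)*x4*x8*x13 + (2)*x4*x9*x10 + (-1)*x4*x9*x11 + (-2)*x4*x10*x10 + x4*x10*x11 + (-1)*x4*x10*x13 + (-1)*x4*x11*x12 + (-1)*x4*x12*x12 + (-1)*x4*x13*x13 + x5*x5*x5 + (-1)*x5*x5*x8 + (-1)*x5*x5*x9 + x5*x5*x13 + (2)*x5*x6*x6 + (-1)*x5*x6*x7 + x5*x6*x8 + (6)*x5*x6*x9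 + (-1)*x5*x6*x10 + (-1)*x5*x6*x12 + (-1)*x5*x6*x14 + (-1)*x5*x7*x8 + (-1)*x5*x7*x9 + (2)*x5*x8*x9 + (-1)*x5*x8*x10 + (-1)*x5*x8*x12 + (-1)*x5*x8*x14 + (3)*x5*x9*x9 + (-1)*x5*x9*x10 + (-1)*x5*x9*x12 + (-1)*x5*x9*x14 + (-1)*x5*x10*x10 + (-1)*x5*x12*x12 + (-1)*x5*x13*x13 + x6*x6*x6 + (3)*x6*x6*x7 + (4)*x6*x6*x8 + x6*x6*x10 + (3)*x6*x6*x11 + (3)*x6*x6*x13 + (2)*x6*x7*x8 + (6)*x6*x7*x9 + (-1)*x6*x7*x10 + (-1)*x6*x7*x12 + (-1)*x6*x7*x14 + (2)*x6*x8*x8 + (6)*x6*x8*x9 + (-1)*x6*x8*x10 + (3)*x6*x8*x11 + x6*x8*x13 + (-1)*x6*x8*x14 + (6)*x6*x9*x11 + x6*x9*x12 + x6*x9*x13 + x6*x10*x10 + (-1)*x6*x10*x11 + (-1)*x6*x10*x12 + (-1)*x6*x10*x13 + (2)*x6*x11*x11 + x6*x11*x12 + (2)*x6*x11*x13 + (-1)*x6*x11*x14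 + x6*x12*x12 + x6*x12*x13 + x6*x13*x13 + x7*x7*x11 + (3)*x7*x8*x9 + (-1)*x7*x8*x10 + x7*x8*x11 + (-1)*x7*x8*x12 + (-1)*x7*x8*x14 + (4)*x7*x9*x9 + (-1)*x7*x9*x10 + x7*x9*x11 + (-1)*x7*x9*x12 + (-1)*x7*x9*x14 + (-1)*x8*x8*x8 + (2)*x8*x8*x9 + (-1)*x8*x8*x10 + (-1)*x8*x8*x13 + (5)*x8*x9*x9 + (-1)*x8*x9*x10 + (4)*x8*x9*x11 + x8*x9*x13 + (-1)*x8*x9*x14 + x8*x10*x10 + (-1)*x8*x10*x11 + (-1)*x8*x10*x12 + (-1)*x8*x10*x13 + x8*x11*x11 + (-1)*x8*x11*x12 + (-1)*x8*x11*x14 + x8*x12*x12 + (-1)*x8*x12*x13 + x9*x9*x9 + (4)*x9*x9*x11 + (-1)*x9*x9*x12 + x9*x9*x13 + x9*x10*x10 + (-1)*x9*x10*x11 + x9*x11*x11 + x9*x11*x13 + (-1)*x9*x11*x14 + x9*x12*x12 + x9*x12*x13 + (2)*x9*x13*x13 + x10*x10*x11 + (-1)*x10*x10*x12 + x10*x10*x13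 + (-1)*x10*x11*x12 + (-1)*x10*x11*x13 + (-1)*x10*x12*x13 + (-1)*x10*x13*x13 + x11*x11*x13 + x11*x12*x12 + x11*x13*x13 + (-1)*x12*x12*x12 + x12*x12*x13 + (-1)*x12*x13*x13)*h2
end

section
/- Let F be a field of characteristic 2. For every permitted coloring of ∂Δ⁵, the cocycle sum of the polynomial c(a,b,c,d,e) = bce²+b²e²+b²de+ac²e+b³e+bd³+ad³+abd²+a²d²+a²cd+b³d vanishes: Σ_{i=1}^{6} (−1)^{i−1} c[u_i] = 0 in F, where u_i = {1,…,6}∖{i}. -/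
open Finset

/-!
Index the tetrahedra of `∂Δ⁵` by their complementary edges (vertices numbered from 0): the
tetrahedron `{a, b}ᶜ` is a face of exactly the two pentachora `{a}ᶜ` and `{b}ᶜ`, and
permittedness on each of them prescribes its `y`-value as a linear form in `x`-values. Equating
the two predictions gives linear relations among the fifteen `x`-values; modulo 2, six of them
express the `x`-values on the edges `45, 35, 34, 25, 24, 14` through the remaining nine. After
this substitution the cocycle sum is an integer polynomial in nine free variables all of whose
coefficients are even.
-/

theorem orderEmbOfFin_univ_erase {n : ℕ} (i : Fin (n + 1))
    (h : ((univ : Finset (Fin (n + 1))).erase i).card = n) (j : Fin n) :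
    (univ.erase i).orderEmbOfFin h j = i.succAbove j :=
  (congrFun (orderEmbOfFin_unique h (fun k => by simp [Fin.succAbove_ne])
    (Fin.strictMono_succAbove i)) j).symm

theorem pentFace_univ_erase (i : Fin 6) (j : Fin 5) :
    pentFace (univ.erase i) (card_erase6 i) j = {i, i.succAbove j}ᶜ := by
  ext v
  simp only [pentFace, pentVert, orderEmbOfFin_univ_erase, mem_erase, mem_univ, mem_compl,
    mem_insert, mem_singleton]
  tauto

section Coloring

variable {F : Type*} [Field F]

theorem xv_eq (χ : Finset (Fin 6) → F × F) (i : Fin 6) (j : Fin 5) :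
    xv F χ i j = (χ {i, i.succAbove j}ᶜ).1 := by
  rw [xv, pentFace_univ_erase]

theorem Permitted.snd_eq {χ : Finset (Fin 6) → F × F} (hχ : Permitted χ) (i : Fin 6)
    (j : Fin 5) :
    (χ {i, i.succAbove j}ᶜ).2 = ∑ k, (Rmat j k : F) * (χ {i, i.succAbove k}ᶜ).1 := by
  simpa only [pentFace_univ_erase] using hχ (univ.erase i) (card_erase6 i) j

end Coloring

def cocyclePoly {R : Type*} [CommRing R] (a b c d e : R) : R :=
  b*c*e^2 + b^2*e^2 + b^2*d*e + a*c^2*e + b^3*e + b*d^3 + a*d^3 + a*b*d^2 + a^2*d^2 + a^2*c*d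
    + b^3*d

section CompatibleValues

variable {R : Type*} [CommRing R] [CharP R 2] (x : Fin 6 → Fin 6 → R)
  (hx : ∀ a b, x a b = x b a)
  (hcompat : ∀ (a b : Fin 6) (j j' : Fin 5), a.succAbove j = b → b.succAbove j' = a →
    ∑ k, (Rmat j k : R) * x a (a.succAbove k) = ∑ k, (Rmat j' k : R) * x b (b.succAbove k))
include hx hcompat

theorem edge_relations_of_compat :
    x 4 5 = x 1 2 + x 2 3 + x 0 5 ∧
    x 3 5 = x 1 3 + x 2 3 + x 0 5 + x 1 5 ∧
    x 3 4 = x 0 1 + x 2 3 + x 0 5 ∧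
    x 1 4 = x 0 3 + x 1 3 + x 0 4 ∧
    x 2 4 = x 0 2 + x 0 4 + x 2 3 + x 0 5 ∧
    x 2 5 = x 0 3 + x 1 3 + x 0 2 + x 2 3 + x 0 5 + x 1 5 := by
  have e25 := hcompat 2 5 4 2 rfl rfl
  have e35 := hcompat 3 5 4 3 rfl rfl
  have e14 := hcompat 1 4 3 1 rfl rfl
  have e45 := hcompat 4 5 4 4 rfl rfl
  have e34 := hcompat 3 4 3 3 rfl rfl
  have e24 := hcompat 2 4 3 2 rfl rfl
  simp (disch := decide) only [Fin.sum_univ_five, Fin.succAbove_of_castSucc_lt,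
    Fin.succAbove_of_le_castSucc, Fin.reduceCastSucc, Fin.reduceSucc, Rmat, Matrix.of_apply,
    Matrix.cons_val, Int.cast_zero, Int.cast_one, Int.cast_neg, Int.cast_ofNat,
    fun a b (_ : b < a) => hx a b] at e25 e35 e14 e45 e34 e24
  refine ⟨?_, ?_, ?_, ?_, ?_, ?_⟩
  · linear_combination (norm := (ring_nf; simp [CharTwo.ofNat_eq_mod])) e25
  · linear_combination (norm := (ring_nf; simp [CharTwo.ofNat_eq_mod])) e35
  · linear_combination (norm := (ring_nf; simp [CharTwo.ofNat_eq_mod])) e14 + e25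
  · linear_combination (norm := (ring_nf; simp [CharTwo.ofNat_eq_mod])) e34
  · linear_combination (norm := (ring_nf; simp [CharTwo.ofNat_eq_mod])) e24 + e25
  · linear_combination (norm := (ring_nf; simp [CharTwo.ofNat_eq_mod])) e45 + e34 + e24 + e25

set_option maxRecDepth 4000 in
theorem cocycle_sum_eq_zero_of_compat :
    ∑ i : Fin 6, (-1 : R) ^ (i : ℕ) * cocyclePoly (x i (i.succAbove 0)) (x i (i.succAbove 1))
      (x i (i.succAbove 2)) (x i (i.succAbove 3)) (x i (i.succAbove 4)) = 0 := by
  obtain ⟨h45, h35, h34, h14, h24, h25⟩ := edge_relations_of_compat x hx hcompat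
  simp only [CharTwo.neg_eq, one_pow, one_mul, Fin.sum_univ_six]
  simp (disch := decide) only [Fin.succAbove_of_castSucc_lt, Fin.succAbove_of_le_castSucc,
    Fin.reduceCastSucc, Fin.reduceSucc, fun a b (_ : b < a) => hx a b]
  rw [h45, h35, h34, h14, h24, h25]
  unfold cocyclePoly
  ring_nf
  simp [CharTwo.ofNat_eq_mod]

end CompatibleValues

/-- char 2: the cocycle sum of bce²+b²e²+b²de+ac²e+b³e+bd³+ad³+abd²+a²d²+a²cd+b³d over a permitted coloring of ∂Δ⁵ vanishes. -/
theorem statement14 (F : Type*) [Field F] [CharP F 2]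
    (χ : Finset (Fin 6) → F × F) (hχ : Permitted χ) :
    ∑ i : Fin 6, (-1 : F) ^ (i : ℕ) *
      (let a := xv F χ i 0; let b := xv F χ i 1; let c := xv F χ i 2;
       let d := xv F χ i 3; let e := xv F χ i 4;
       b*c*e^2 + b^2*e^2 + b^2*d*e + a*c^2*e + b^3*e + b*d^3 + a*d^3 + a*b*d^2 + a^2*d^2 + a^2*c*d + b^3*d) = 0 := by
  have key := cocycle_sum_eq_zero_of_compat (fun a b => (χ {a, b}ᶜ).1)
    (fun a b => by rw [pair_comm])
    (fun a b j j' hj hj' => by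
      rw [← hχ.snd_eq, ← hχ.snd_eq, hj, hj', pair_comm])
  simpa only [xv_eq, cocyclePoly] using key
end

section
/- Let F be a field of characteristic 0 (e.g., F = ℚ). For every permitted coloring of ∂Δ⁵, the alternating cocycle sum of the polynomial c(a,b,c,d,e) = 4e²−6ce+6be−d²+2bd−2ad+4c²−8bc+2ac+3b² vanishes: Σ_{i=1}^{6} (−1)^{i−1} c[u_i] = 0 in F, where u_i = {1,…,6}∖{i}. -/
open Finset

lemma pv0 : ∀ k : Fin 5, pentVert ((univ : Finset (Fin 6)).erase 0) (card_erase6 0) k = ![1, 2, 3, 4, 5] k := by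
  have h := Finset.orderEmbOfFin_unique (card_erase6 (0 : Fin 6)) (f := ![1, 2, 3, 4, 5]) (by decide) (by decide)
  intro k; rw [pentVert, ← h]

lemma pf00 : pentFace ((univ : Finset (Fin 6)).erase 0) (card_erase6 0) 0 = ({2,3,4,5} : Finset (Fin 6)) := by
  rw [pentFace, pv0]; decide

lemma pf01 : pentFace ((univ : Finset (Fin 6)).erase 0) (card_erase6 0) 1 = ({1,3,4,5} : Finset (Fin 6)) := by
  rw [pentFace, pv0]; decide

lemma pf02 : pentFace ((univ : Finset (Fin 6)).erase 0) (card_erase6 0) 2 = ({1,2,4,5} : Finset (Fin 6)) := by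
  rw [pentFace, pv0]; decide

lemma pf03 : pentFace ((univ : Finset (Fin 6)).erase 0) (card_erase6 0) 3 = ({1,2,3,5} : Finset (Fin 6)) := by
  rw [pentFace, pv0]; decide

lemma pf04 : pentFace ((univ : Finset (Fin 6)).erase 0) (card_erase6 0) 4 = ({1,2,3,4} : Finset (Fin 6)) := by
  rw [pentFace, pv0]; decide

lemma pv1 : ∀ k : Fin 5, pentVert ((univ : Finset (Fin 6)).erase 1) (card_erase6 1) k = ![0, 2, 3, 4, 5] k := by
  have h := Finset.orderEmbOfFin_unique (card_erase6 (1 : Fin 6)) (f := ![0, 2, 3, 4, 5]) (by decide) (by decide)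
  intro k; rw [pentVert, ← h]

lemma pf10 : pentFace ((univ : Finset (Fin 6)).erase 1) (card_erase6 1) 0 = ({2,3,4,5} : Finset (Fin 6)) := by
  rw [pentFace, pv1]; decide

lemma pf11 : pentFace ((univ : Finset (Fin 6)).erase 1) (card_erase6 1) 1 = ({0,3,4,5} : Finset (Fin 6)) := by
  rw [pentFace, pv1]; decide

lemma pf12 : pentFace ((univ : Finset (Fin 6)).erase 1) (card_erase6 1) 2 = ({0,2,4,5} : Finset (Fin 6)) := by
  rw [pentFace, pv1]; decide

lemma pf13 : pentFace ((univ : Finset (Fin 6)).erase 1) (card_erase6 1) 3 = ({0,2,3,5} : Finset (Fin 6)) := by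
  rw [pentFace, pv1]; decide

lemma pf14 : pentFace ((univ : Finset (Fin 6)).erase 1) (card_erase6 1) 4 = ({0,2,3,4} : Finset (Fin 6)) := by
  rw [pentFace, pv1]; decide

lemma pv2 : ∀ k : Fin 5, pentVert ((univ : Finset (Fin 6)).erase 2) (card_erase6 2) k = ![0, 1, 3, 4, 5] k := by
  have h := Finset.orderEmbOfFin_unique (card_erase6 (2 : Fin 6)) (f := ![0, 1, 3, 4, 5]) (by decide) (by decide)
  intro k; rw [pentVert, ← h]

lemma pf20 : pentFace ((univ : Finset (Fin 6)).erase 2) (card_erase6 2) 0 = ({1,3,4,5} : Finset (Fin 6)) := by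
  rw [pentFace, pv2]; decide

lemma pf21 : pentFace ((univ : Finset (Fin 6)).erase 2) (card_erase6 2) 1 = ({0,3,4,5} : Finset (Fin 6)) := by
  rw [pentFace, pv2]; decide

lemma pf22 : pentFace ((univ : Finset (Fin 6)).erase 2) (card_erase6 2) 2 = ({0,1,4,5} : Finset (Fin 6)) := by
  rw [pentFace, pv2]; decide

lemma pf23 : pentFace ((univ : Finset (Fin 6)).erase 2) (card_erase6 2) 3 = ({0,1,3,5} : Finset (Fin 6)) := by
  rw [pentFace, pv2]; decide

lemma pf24 : pentFace ((univ : Finset (Fin 6)).erase 2) (card_erase6 2) 4 = ({0,1,3,4} : Finset (Fin 6)) := by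
  rw [pentFace, pv2]; decide

lemma pv3 : ∀ k : Fin 5, pentVert ((univ : Finset (Fin 6)).erase 3) (card_erase6 3) k = ![0, 1, 2, 4, 5] k := by
  have h := Finset.orderEmbOfFin_unique (card_erase6 (3 : Fin 6)) (f := ![0, 1, 2, 4, 5]) (by decide) (by decide)
  intro k; rw [pentVert, ← h]

lemma pf30 : pentFace ((univ : Finset (Fin 6)).erase 3) (card_erase6 3) 0 = ({1,2,4,5} : Finset (Fin 6)) := by
  rw [pentFace, pv3]; decide

lemma pf31 : pentFace ((univ : Finset (Fin 6)).erase 3) (card_erase6 3) 1 = ({0,2,4,5} : Finset (Fin 6)) := by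
  rw [pentFace, pv3]; decide

lemma pf32 : pentFace ((univ : Finset (Fin 6)).erase 3) (card_erase6 3) 2 = ({0,1,4,5} : Finset (Fin 6)) := by
  rw [pentFace, pv3]; decide

lemma pf33 : pentFace ((univ : Finset (Fin 6)).erase 3) (card_erase6 3) 3 = ({0,1,2,5} : Finset (Fin 6)) := by
  rw [pentFace, pv3]; decide

lemma pf34 : pentFace ((univ : Finset (Fin 6)).erase 3) (card_erase6 3) 4 = ({0,1,2,4} : Finset (Fin 6)) := by
  rw [pentFace, pv3]; decide

lemma pv4 : ∀ k : Fin 5, pentVert ((univ : Finset (Fin 6)).erase 4) (card_erase6 4) k = ![0, 1, 2, 3, 5] k := by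
  have h := Finset.orderEmbOfFin_unique (card_erase6 (4 : Fin 6)) (f := ![0, 1, 2, 3, 5]) (by decide) (by decide)
  intro k; rw [pentVert, ← h]

lemma pf40 : pentFace ((univ : Finset (Fin 6)).erase 4) (card_erase6 4) 0 = ({1,2,3,5} : Finset (Fin 6)) := by
  rw [pentFace, pv4]; decide

lemma pf41 : pentFace ((univ : Finset (Fin 6)).erase 4) (card_erase6 4) 1 = ({0,2,3,5} : Finset (Fin 6)) := by
  rw [pentFace, pv4]; decide

lemma pf42 : pentFace ((univ : Finset (Fin 6)).erase 4) (card_erase6 4) 2 = ({0,1,3,5} : Finset (Fin 6)) := by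
  rw [pentFace, pv4]; decide

lemma pf43 : pentFace ((univ : Finset (Fin 6)).erase 4) (card_erase6 4) 3 = ({0,1,2,5} : Finset (Fin 6)) := by
  rw [pentFace, pv4]; decide

lemma pf44 : pentFace ((univ : Finset (Fin 6)).erase 4) (card_erase6 4) 4 = ({0,1,2,3} : Finset (Fin 6)) := by
  rw [pentFace, pv4]; decide

lemma pv5 : ∀ k : Fin 5, pentVert ((univ : Finset (Fin 6)).erase 5) (card_erase6 5) k = ![0, 1, 2, 3, 4] k := by
  have h := Finset.orderEmbOfFin_unique (card_erase6 (5 : Fin 6)) (f := ![0, 1, 2, 3, 4]) (by decide) (by decide)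
  intro k; rw [pentVert, ← h]

lemma pf50 : pentFace ((univ : Finset (Fin 6)).erase 5) (card_erase6 5) 0 = ({1,2,3,4} : Finset (Fin 6)) := by
  rw [pentFace, pv5]; decide

lemma pf51 : pentFace ((univ : Finset (Fin 6)).erase 5) (card_erase6 5) 1 = ({0,2,3,4} : Finset (Fin 6)) := by
  rw [pentFace, pv5]; decide

lemma pf52 : pentFace ((univ : Finset (Fin 6)).erase 5) (card_erase6 5) 2 = ({0,1,3,4} : Finset (Fin 6)) := by
  rw [pentFace, pv5]; decide

lemma pf53 : pentFace ((univ : Finset (Fin 6)).erase 5) (card_erase6 5) 3 = ({0,1,2,4} : Finset (Fin 6)) := by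
  rw [pentFace, pv5]; decide

lemma pf54 : pentFace ((univ : Finset (Fin 6)).erase 5) (card_erase6 5) 4 = ({0,1,2,3} : Finset (Fin 6)) := by
  rw [pentFace, pv5]; decide

set_option maxHeartbeats 2000000 in
/-- char 0: the alternating cocycle sum of 4e²−6ce+6be−d²+2bd−2ad+4c²−8bc+2ac+3b² over a permitted coloring of ∂Δ⁵ vanishes. -/
theorem statement17 (F : Type*) [Field F] [CharZero F]
    (χ : Finset (Fin 6) → F × F) (hχ : Permitted χ) :
    ∑ i : Fin 6, (-1 : F) ^ (i : ℕ) *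
      (let a := xv F χ i 0; let b := xv F χ i 1; let c := xv F χ i 2;
       let d := xv F χ i 3; let e := xv F χ i 4;
       4*e^2 - 6*c*e + 6*b*e - d^2 + 2*b*d - 2*a*d + 4*c^2 - 8*b*c + 2*a*c + 3*b^2) = 0 := by
  have E : ∀ (i : Fin 6) (k : Fin 5), (χ (pentFace ((univ : Finset (Fin 6)).erase i) (card_erase6 i) k)).2 = ∑ j : Fin 5, (Rmat k j : F) * (χ (pentFace ((univ : Finset (Fin 6)).erase i) (card_erase6 i) j)).1 := fun i k => hχ _ (card_erase6 i) k
  have E13 := E 1 3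
  rw [Fin.sum_univ_five] at E13
  simp only [pf00, pf01, pf02, pf03, pf04, pf10, pf11, pf12, pf13, pf14, pf20, pf21, pf22, pf23, pf24, pf30, pf31, pf32, pf33, pf34, pf40, pf41, pf42, pf43, pf44, pf50, pf51, pf52, pf53, pf54] at E13
  norm_num [Rmat, Matrix.cons_val', Matrix.cons_val_zero, Matrix.cons_val_one, Matrix.head_cons, Matrix.empty_val', Matrix.cons_val_fin_one, Matrix.head_fin_const, Matrix.cons_val_two, Matrix.cons_val_three, Matrix.cons_val_four, Matrix.tail_cons] at E13
  have E23 := E 2 3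
  rw [Fin.sum_univ_five] at E23
  simp only [pf00, pf01, pf02, pf03, pf04, pf10, pf11, pf12, pf13, pf14, pf20, pf21, pf22, pf23, pf24, pf30, pf31, pf32, pf33, pf34, pf40, pf41, pf42, pf43, pf44, pf50, pf51, pf52, pf53, pf54] at E23
  norm_num [Rmat, Matrix.cons_val', Matrix.cons_val_zero, Matrix.cons_val_one, Matrix.head_cons, Matrix.empty_val', Matrix.cons_val_fin_one, Matrix.head_fin_const, Matrix.cons_val_two, Matrix.cons_val_three, Matrix.cons_val_four, Matrix.tail_cons] at E23
  have E24 := E 2 4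
  rw [Fin.sum_univ_five] at E24
  simp only [pf00, pf01, pf02, pf03, pf04, pf10, pf11, pf12, pf13, pf14, pf20, pf21, pf22, pf23, pf24, pf30, pf31, pf32, pf33, pf34, pf40, pf41, pf42, pf43, pf44, pf50, pf51, pf52, pf53, pf54] at E24
  norm_num [Rmat, Matrix.cons_val', Matrix.cons_val_zero, Matrix.cons_val_one, Matrix.head_cons, Matrix.empty_val', Matrix.cons_val_fin_one, Matrix.head_fin_const, Matrix.cons_val_two, Matrix.cons_val_three, Matrix.cons_val_four, Matrix.tail_cons] at E24
  have E33 := E 3 3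
  rw [Fin.sum_univ_five] at E33
  simp only [pf00, pf01, pf02, pf03, pf04, pf10, pf11, pf12, pf13, pf14, pf20, pf21, pf22, pf23, pf24, pf30, pf31, pf32, pf33, pf34, pf40, pf41, pf42, pf43, pf44, pf50, pf51, pf52, pf53, pf54] at E33
  norm_num [Rmat, Matrix.cons_val', Matrix.cons_val_zero, Matrix.cons_val_one, Matrix.head_cons, Matrix.empty_val', Matrix.cons_val_fin_one, Matrix.head_fin_const, Matrix.cons_val_two, Matrix.cons_val_three, Matrix.cons_val_four, Matrix.tail_cons] at E33
  have E34 := E 3 4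
  rw [Fin.sum_univ_five] at E34
  simp only [pf00, pf01, pf02, pf03, pf04, pf10, pf11, pf12, pf13, pf14, pf20, pf21, pf22, pf23, pf24, pf30, pf31, pf32, pf33, pf34, pf40, pf41, pf42, pf43, pf44, pf50, pf51, pf52, pf53, pf54] at E34
  norm_num [Rmat, Matrix.cons_val', Matrix.cons_val_zero, Matrix.cons_val_one, Matrix.head_cons, Matrix.empty_val', Matrix.cons_val_fin_one, Matrix.head_fin_const, Matrix.cons_val_two, Matrix.cons_val_three, Matrix.cons_val_four, Matrix.tail_cons] at E34
  have E41 := E 4 1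
  rw [Fin.sum_univ_five] at E41
  simp only [pf00, pf01, pf02, pf03, pf04, pf10, pf11, pf12, pf13, pf14, pf20, pf21, pf22, pf23, pf24, pf30, pf31, pf32, pf33, pf34, pf40, pf41, pf42, pf43, pf44, pf50, pf51, pf52, pf53, pf54] at E41
  norm_num [Rmat, Matrix.cons_val', Matrix.cons_val_zero, Matrix.cons_val_one, Matrix.head_cons, Matrix.empty_val', Matrix.cons_val_fin_one, Matrix.head_fin_const, Matrix.cons_val_two, Matrix.cons_val_three, Matrix.cons_val_four, Matrix.tail_cons] at E41
  have E42 := E 4 2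
  rw [Fin.sum_univ_five] at E42
  simp only [pf00, pf01, pf02, pf03, pf04, pf10, pf11, pf12, pf13, pf14, pf20, pf21, pf22, pf23, pf24, pf30, pf31, pf32, pf33, pf34, pf40, pf41, pf42, pf43, pf44, pf50, pf51, pf52, pf53, pf54] at E42
  norm_num [Rmat, Matrix.cons_val', Matrix.cons_val_zero, Matrix.cons_val_one, Matrix.head_cons, Matrix.empty_val', Matrix.cons_val_fin_one, Matrix.head_fin_const, Matrix.cons_val_two, Matrix.cons_val_three, Matrix.cons_val_four, Matrix.tail_cons] at E42
  have E43 := E 4 3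
  rw [Fin.sum_univ_five] at E43
  simp only [pf00, pf01, pf02, pf03, pf04, pf10, pf11, pf12, pf13, pf14, pf20, pf21, pf22, pf23, pf24, pf30, pf31, pf32, pf33, pf34, pf40, pf41, pf42, pf43, pf44, pf50, pf51, pf52, pf53, pf54] at E43
  norm_num [Rmat, Matrix.cons_val', Matrix.cons_val_zero, Matrix.cons_val_one, Matrix.head_cons, Matrix.empty_val', Matrix.cons_val_fin_one, Matrix.head_fin_const, Matrix.cons_val_two, Matrix.cons_val_three, Matrix.cons_val_four, Matrix.tail_cons] at E43
  have E44 := E 4 4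
  rw [Fin.sum_univ_five] at E44
  simp only [pf00, pf01, pf02, pf03, pf04, pf10, pf11, pf12, pf13, pf14, pf20, pf21, pf22, pf23, pf24, pf30, pf31, pf32, pf33, pf34, pf40, pf41, pf42, pf43, pf44, pf50, pf51, pf52, pf53, pf54] at E44
  norm_num [Rmat, Matrix.cons_val', Matrix.cons_val_zero, Matrix.cons_val_one, Matrix.head_cons, Matrix.empty_val', Matrix.cons_val_fin_one, Matrix.head_fin_const, Matrix.cons_val_two, Matrix.cons_val_three, Matrix.cons_val_four, Matrix.tail_cons] at E44
  have E52 := E 5 2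
  rw [Fin.sum_univ_five] at E52
  simp only [pf00, pf01, pf02, pf03, pf04, pf10, pf11, pf12, pf13, pf14, pf20, pf21, pf22, pf23, pf24, pf30, pf31, pf32, pf33, pf34, pf40, pf41, pf42, pf43, pf44, pf50, pf51, pf52, pf53, pf54] at E52
  norm_num [Rmat, Matrix.cons_val', Matrix.cons_val_zero, Matrix.cons_val_one, Matrix.head_cons, Matrix.empty_val', Matrix.cons_val_fin_one, Matrix.head_fin_const, Matrix.cons_val_two, Matrix.cons_val_three, Matrix.cons_val_four, Matrix.tail_cons] at E52
  have E53 := E 5 3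
  rw [Fin.sum_univ_five] at E53
  simp only [pf00, pf01, pf02, pf03, pf04, pf10, pf11, pf12, pf13, pf14, pf20, pf21, pf22, pf23, pf24, pf30, pf31, pf32, pf33, pf34, pf40, pf41, pf42, pf43, pf44, pf50, pf51, pf52, pf53, pf54] at E53
  norm_num [Rmat, Matrix.cons_val', Matrix.cons_val_zero, Matrix.cons_val_one, Matrix.head_cons, Matrix.empty_val', Matrix.cons_val_fin_one, Matrix.head_fin_const, Matrix.cons_val_two, Matrix.cons_val_three, Matrix.cons_val_four, Matrix.tail_cons] at E53
  have E54 := E 5 4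
  rw [Fin.sum_univ_five] at E54
  simp only [pf00, pf01, pf02, pf03, pf04, pf10, pf11, pf12, pf13, pf14, pf20, pf21, pf22, pf23, pf24, pf30, pf31, pf32, pf33, pf34, pf40, pf41, pf42, pf43, pf44, pf50, pf51, pf52, pf53, pf54] at E54
  norm_num [Rmat, Matrix.cons_val', Matrix.cons_val_zero, Matrix.cons_val_one, Matrix.head_cons, Matrix.empty_val', Matrix.cons_val_fin_one, Matrix.head_fin_const, Matrix.cons_val_two, Matrix.cons_val_three, Matrix.cons_val_four, Matrix.tail_cons] at E54
  rw [Fin.sum_univ_six]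
  simp only [xv, pf00, pf01, pf02, pf03, pf04, pf10, pf11, pf12, pf13, pf14, pf20, pf21, pf22, pf23, pf24, pf30, pf31, pf32, pf33, pf34, pf40, pf41, pf42, pf43, pf44, pf50, pf51, pf52, pf53, pf54]
  norm_num [show ((0:Fin 6):ℕ)=0 from rfl, show ((1:Fin 6):ℕ)=1 from rfl, show ((2:Fin 6):ℕ)=2 from rfl, show ((3:Fin 6):ℕ)=3 from rfl, show ((4:Fin 6):ℕ)=4 from rfl, show ((5:Fin 6):ℕ)=5 from rfl]
  linear_combination -((34 * (χ ({0,1,2,3} : Finset (Fin 6))).1 + (-16) * (χ ({0,1,2,4} : Finset (Fin 6))).1 + (-4) * (χ ({0,1,2,5} : Finset (Fin 6))).1 + (-28) * (χ ({0,1,3,4} : Finset (Fin 6))).1 + 2 * (χ ({0,1,3,5} : Finset (Fin 6))).1 + 12 * (χ ({0,1,4,5} : Finset (Fin 6))).1 + 40 * (χ ({0,2,3,4} : Finset (Fin 6))).1 + 4 * (χ ({0,2,3,5} : Finset (Fin 6))).1 + (-12) * (χ ({0,2,4,5} : Finset (Fin 6))).1 + (-2) * (χ ({0,3,4,5} : Finset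 (Fin 6))).1 + (-6) * (χ ({1,2,3,5} : Finset (Fin 6))).1 + (-12) * (χ ({1,2,4,5} : Finset (Fin 6))).1 + 18 * (χ ({1,3,4,5} : Finset (Fin 6))).1 + (-4) * (χ ({2,3,4,5} : Finset (Fin 6))).1) * E44 - (34 * (χ ({0,1,2,3} : Finset (Fin 6))).1 + (-16) * (χ ({0,1,2,4} : Finset (Fin 6))).1 + (-4) * (χ ({0,1,2,5} : Finset (Fin 6))).1 + (-28) * (χ ({0,1,3,4} : Finset (Fin 6))).1 + 2 * (χ ({0,1,3,5} : Finset (Fin 6))).1 + 12 * (χ ({0,1,4,5} : Finset (Fin 6))).1 + 40 * (χ ({0,2,3,4} : Finset (Fin 6))).1 + 4 * (χ ({0,2,3,5} : Finset (Fin 6))).1 + (-12) * (χ ({0,2,4,5} : Finset (Fin 6))).1 + (-2) * (χ ({0,3,4,5} : Finset (Fin 6))).1 + (-6) * (χ ({1,2,3,5} : Finset (Fin 6))).1 + (-12) * (χ ({1,2,4,5} : Finset (Fin 6))).1 + 18 * (χ ({1,3,4,5} : Finset (Fin 6))).1 + (-4) * (χ ({2,3,4,5} : Finset (Fin 6))).1)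 * E54 + ((-28) * (χ ({0,1,2,3} : Finset (Fin 6))).1 + 25 * (χ ({0,1,2,4} : Finset (Fin 6))).1 + 42 * (χ ({0,1,3,4} : Finset (Fin 6))).1 + (-9) * (χ ({0,1,3,5} : Finset (Fin 6))).1 + (-30) * (χ ({0,1,4,5} : Finset (Fin 6))).1 + (-49) * (χ ({0,2,3,4} : Finset (Fin 6))).1 + 39 * (χ ({0,2,4,5} : Finset (Fin 6))).1 + 4 * (χ ({1,2,3,4} : Finset (Fin 6))).1 + 9 * (χ ({1,2,3,5} : Finset (Fin 6))).1 + (-6) * (χ ({1,2,4,5} : Finset (Fin 6))).1 + (-3) * (χ ({1,3,4,5} : Finset (Fin 6))).1) * E34 - ((-28) * (χ ({0,1,2,3} : Finset (Fin 6))).1 + 25 * (χ ({0,1,2,4} : Finset (Fin 6))).1 + 42 * (χ ({0,1,3,4} : Finset (Fin 6))).1 + (-9) * (χ ({0,1,3,5} : Finset (Fin 6))).1 + (-30) * (χ ({0,1,4,5} : Finset (Fin 6))).1 + (-49) * (χ ({0,2,3,4} : Finset (Fin 6))).1 + 39 * (χ ({0,2,4,5} : Finset (Fin 6))).1 + 4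 * (χ ({1,2,3,4} : Finset (Fin 6))).1 + 9 * (χ ({1,2,3,5} : Finset (Fin 6))).1 + (-6) * (χ ({1,2,4,5} : Finset (Fin 6))).1 + (-3) * (χ ({1,3,4,5} : Finset (Fin 6))).1) * E53 + (20 * (χ ({0,1,2,3} : Finset (Fin 6))).1 + (-14) * (χ ({0,1,2,4} : Finset (Fin 6))).1 + (-2) * (χ ({0,1,2,5} : Finset (Fin 6))).1 + (-24) * (χ ({0,1,3,4} : Finset (Fin 6))).1 + 4 * (χ ({0,1,3,5} : Finset (Fin 6))).1 + 16 * (χ ({0,1,4,5} : Finset (Fin 6))).1 + 30 * (χ ({0,2,3,4} : Finset (Fin 6))).1 + (-18) * (χ ({0,2,4,5} : Finset (Fin 6))).1 + (-4) * (χ ({1,2,3,5} : Finset (Fin 6))).1 + (-4) * (χ ({1,2,4,5} : Finset (Fin 6))).1 + 8 * (χ ({1,3,4,5} : Finset (Fin 6))).1 + (-2) * (χ ({2,3,4,5} : Finset (Fin 6))).1) * E33 - (20 * (χ ({0,1,2,3} : Finset (Fin 6))).1 + (-14) * (χ ({0,1,2,4} : Finset (Fin 6))).1 + (-2) * (χ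 ({0,1,2,5} : Finset (Fin 6))).1 + (-24) * (χ ({0,1,3,4} : Finset (Fin 6))).1 + 4 * (χ ({0,1,3,5} : Finset (Fin 6))).1 + 16 * (χ ({0,1,4,5} : Finset (Fin 6))).1 + 30 * (χ ({0,2,3,4} : Finset (Fin 6))).1 + (-18) * (χ ({0,2,4,5} : Finset (Fin 6))).1 + (-4) * (χ ({1,2,3,5} : Finset (Fin 6))).1 + (-4) * (χ ({1,2,4,5} : Finset (Fin 6))).1 + 8 * (χ ({1,3,4,5} : Finset (Fin 6))).1 + (-2) * (χ ({2,3,4,5} : Finset (Fin 6))).1) * E43 + (36 * (χ ({0,1,2,3} : Finset (Fin 6))).1 + (-27) * (χ ({0,1,2,4} : Finset (Fin 6))).1 + (-52) * (χ ({0,1,3,4} : Finset (Fin 6))).1 + 9 * (χ ({0,1,3,5} : Finset (Fin 6))).1 + 34 * (χ ({0,1,4,5} : Finset (Fin 6))).1 + 61 * (χ ({0,2,3,4} : Finset (Fin 6))).1 + (-43) * (χ ({0,2,4,5} : Finset (Fin 6))).1 + (-9) * (χ ({1,2,3,5} : Finset (Fin 6))).1 + 9 * (χ ({1,3,4,5}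 : Finset (Fin 6))).1) * E24 - (36 * (χ ({0,1,2,3} : Finset (Fin 6))).1 + (-27) * (χ ({0,1,2,4} : Finset (Fin 6))).1 + (-52) * (χ ({0,1,3,4} : Finset (Fin 6))).1 + 9 * (χ ({0,1,3,5} : Finset (Fin 6))).1 + 34 * (χ ({0,1,4,5} : Finset (Fin 6))).1 + 61 * (χ ({0,2,3,4} : Finset (Fin 6))).1 + (-43) * (χ ({0,2,4,5} : Finset (Fin 6))).1 + (-9) * (χ ({1,2,3,5} : Finset (Fin 6))).1 + 9 * (χ ({1,3,4,5} : Finset (Fin 6))).1) * E52 + ((-16) * (χ ({0,1,2,3} : Finset (Fin 6))).1 + 13 * (χ ({0,1,2,4} : Finset (Fin 6))).1 + 24 * (χ ({0,1,3,4} : Finset (Fin 6))).1 + (-3) * (χ ({0,1,3,5} : Finset (Fin 6))).1 + (-18) * (χ ({0,1,4,5} : Finset (Fin 6))).1 + (-27) * (χ ({0,2,3,4} : Finset (Fin 6))).1 + 21 * (χ ({0,2,4,5} : Finset (Fin 6))).1 + 3 * (χ ({1,2,3,5} : Finset (Fin 6))).1 + (-3) * (χ ({1,3,4,5} : Finset (Fin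 6))).1) * E23 - ((-16) * (χ ({0,1,2,3} : Finset (Fin 6))).1 + 13 * (χ ({0,1,2,4} : Finset (Fin 6))).1 + 24 * (χ ({0,1,3,4} : Finset (Fin 6))).1 + (-3) * (χ ({0,1,3,5} : Finset (Fin 6))).1 + (-18) * (χ ({0,1,4,5} : Finset (Fin 6))).1 + (-27) * (χ ({0,2,3,4} : Finset (Fin 6))).1 + 21 * (χ ({0,2,4,5} : Finset (Fin 6))).1 + 3 * (χ ({1,2,3,5} : Finset (Fin 6))).1 + (-3) * (χ ({1,3,4,5} : Finset (Fin 6))).1) * E42 + (4 * (χ ({0,1,2,3} : Finset (Fin 6))).1 + (-4) * (χ ({0,1,2,4} : Finset (Fin 6))).1 + (-4) * (χ ({0,1,3,4} : Finset (Fin 6))).1 + 4 * (χ ({0,1,4,5} : Finset (Fin 6))).1 + 4 * (χ ({0,2,3,4} : Finset (Fin 6))).1 + (-4) * (χ ({0,2,4,5} : Finset (Fin 6))).1) * E13 - (4 * (χ ({0,1,2,3} : Finset (Fin 6))).1 + (-4) * (χ ({0,1,2,4} : Finset (Fin 6))).1 + (-4) * (χ ({0,1,3,4} : Finset (Fin 6))).1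 + 4 * (χ ({0,1,4,5} : Finset (Fin 6))).1 + 4 * (χ ({0,2,3,4} : Finset (Fin 6))).1 + (-4) * (χ ({0,2,4,5} : Finset (Fin 6))).1) * E41)
end

section
/- In the polynomial ring 𝔽₂[x₁,…,x₅], let y_i(x) = Σ_{j=1}^{5} 𝓡_{ij} x_j (entries of 𝓡 reduced mod 2), and set c₁ = x₂x₄x₅ + x₂x₃x₅ + x₁x₃x₅ + x₁x₃x₄ + x₁x₂x₄ and c₂ = x₄x₅² + x₃x₅² + x₁x₅² + x₃²x₄ + x₂²x₄ + x₃³ + x₁x₃² + x₂²x₃ + x₁x₂². Then for every pair (α,β) ∈ 𝔽₂ × 𝔽₂ with (α,β) ≠ (0,0) and every homogeneous polynomial P(X,Y) of degree 3 in 𝔽₂[X,Y], the polynomial α·c₁ + β·c₂ + Σ_{i=1}^{5} P(x_i, y_i(x)) is nonzero in 𝔽₂[x₁,…,x₅]. (Hence the cohomology classes of the hexagon 4-cocycles bde+bce+ace+acd+abd and de²+ce²+ae²+c²d+b²d+c³+ac²+b²c+ab² are linearly independent, so dim H⁴_{2,3} ≥ 2.) -/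
open MvPolynomial

/-- y_i(x) = Σ_j 𝓡_{ij} x_j in 𝔽_p[x₁,…,x₅] (variables indexed by `Fin 5`). -/
noncomputable def yPoly (p : ℕ) (i : Fin 5) : MvPolynomial (Fin 5) (ZMod p) :=
  ∑ j : Fin 5, C ((Rmat i j : ℤ) : ZMod p) * X j

/-- c₁ = x₂x₄x₅ + x₂x₃x₅ + x₁x₃x₅ + x₁x₃x₄ + x₁x₂x₄ (0-indexed variables). -/
noncomputable def coc1 : MvPolynomial (Fin 5) (ZMod 2) :=
  X 1 * X 3 * X 4 + X 1 * X 2 * X 4 + X 0 * X 2 * X 4 + X 0 * X 2 * X 3 + X 0 * X 1 * X 3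

/-- c₂ = x₄x₅² + x₃x₅² + x₁x₅² + x₃²x₄ + x₂²x₄ + x₃³ + x₁x₃² + x₂²x₃ + x₁x₂²
(0-indexed variables). -/
noncomputable def coc2 : MvPolynomial (Fin 5) (ZMod 2) :=
  X 3 * X 4 ^ 2 + X 2 * X 4 ^ 2 + X 0 * X 4 ^ 2 + X 2 ^ 2 * X 3 + X 1 ^ 2 * X 3
    + X 2 ^ 3 + X 0 * X 2 ^ 2 + X 1 ^ 2 * X 2 + X 0 * X 1 ^ 2

/-!
For a family of points `ρ k ∈ 𝔽₂⁵`, the linear functional `f ↦ ∑ₖ f(ρ k)` sends the coboundary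
`∑ᵢ P(xᵢ, yᵢ)` to `∑_{k,i} P(ρ k i, yᵢ(ρ k))`, which vanishes for *every* `P` as soon as each
point `(xᵢ, yᵢ)(ρ k)` of `𝔽₂²` is hit an even number of times. Two such families separate the
cocycles (indices 1-based here, 0-based in the code): the coordinate vectors `e₃, e₅`
(functional value `β`), and the cube spanned by `e₂, e₄, e₅`, on which summing a cubic extracts
the coefficient of `x₂x₄x₅` (functional value `α`).
-/

open Finset

theorem eval_aeval {R σ τ : Type*} [CommSemiring R] (v : σ → R) (u : τ → MvPolynomial σ R)
    (P : MvPolynomial τ R) :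
    eval v (aeval u P) = eval (fun t => eval v (u t)) P := by
  rw [← coe_aeval_eq_eval, ← coe_aeval_eq_eval]
  exact DFunLike.congr_fun (comp_aeval u (aeval v)) P

section CharTwo

variable {R : Type*} [CommRing R] [CharP R 2]

theorem sum_comp_eq_zero_of_even_card_fiber {ι κ : Type*} [Fintype ι] [DecidableEq κ]
    (f : κ → R) (g : ι → κ) (h : ∀ k, Even #{i | g i = k}) : ∑ i, f (g i) = 0 := by
  rw [sum_comp]
  refine sum_eq_zero fun k _ => ?_
  obtain ⟨m, hm⟩ := h k
  rw [hm, add_nsmul, ← nsmul_add, CharTwo.add_self_eq_zero, nsmul_zero]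

theorem sum_eval_sum_aeval_eq_zero {σ τ ι κ : Type*} [Fintype ι] [Fintype κ]
    [DecidableEq (τ → R)] (ρ : κ → σ → R) (u : ι → τ → MvPolynomial σ R)
    (h : ∀ w : τ → R, Even #{p : κ × ι | (fun t => eval (ρ p.1) (u p.2 t)) = w})
    (P : MvPolynomial τ R) :
    ∑ k, eval (ρ k) (∑ i, aeval (u i) P) = 0 := by
  simp_rw [map_sum, eval_aeval, ← Fintype.sum_prod_type']
  exact sum_comp_eq_zero_of_even_card_fiber (fun w => eval w P) _ h

end CharTwo

def hexPoint (v : Fin 5 → ZMod 2) (i : Fin 5) : Fin 2 → ZMod 2 :=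
  ![v i, ∑ j, (Rmat i j : ZMod 2) * v j]

theorem eval_X_yPoly_eq_hexPoint (v : Fin 5 → ZMod 2) (i : Fin 5) :
    (fun t => eval v (![X i, yPoly 2 i] t)) = hexPoint v i := by
  ext t
  fin_cases t <;> simp [hexPoint, yPoly]

theorem sum_eval_cocycle_add_coboundary {κ : Type*} [Fintype κ] (ρ : κ → Fin 5 → ZMod 2)
    (hρ : ∀ w, Even #{p : κ × Fin 5 | hexPoint (ρ p.1) p.2 = w})
    (α β : ZMod 2) (P : MvPolynomial (Fin 2) (ZMod 2)) :
    ∑ k, eval (ρ k) (C α * coc1 + C β * coc2 + ∑ i : Fin 5, aeval ![X i, yPoly 2 i] P) =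
      α * ∑ k, eval (ρ k) coc1 + β * ∑ k, eval (ρ k) coc2 := by
  have hcob : ∑ k, eval (ρ k) (∑ i : Fin 5, aeval ![X i, yPoly 2 i] P) = 0 :=
    sum_eval_sum_aeval_eq_zero ρ _ (by simpa only [eval_X_yPoly_eq_hexPoint] using hρ) P
  simp only [map_add, sum_add_distrib, hcob, map_mul, eval_C, mul_sum, add_zero]

def axisPoints : Fin 2 → Fin 5 → ZMod 2 := ![![0, 0, 1, 0, 0], ![0, 0, 0, 0, 1]]

def cubePoints : ZMod 2 × ZMod 2 × ZMod 2 → Fin 5 → ZMod 2 :=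
  fun a => ![0, a.1, 0, a.2.1, a.2.2]

theorem even_card_hexPoint_axisPoints :
    ∀ w, Even #{p : Fin 2 × Fin 5 | hexPoint (axisPoints p.1) p.2 = w} := by
  decide

theorem even_card_hexPoint_cubePoints :
    ∀ w, Even #{p : (ZMod 2 × ZMod 2 × ZMod 2) × Fin 5 | hexPoint (cubePoints p.1) p.2 = w} := by
  decide

theorem sum_eval_axisPoints_coc1 : ∑ k, eval (axisPoints k) coc1 = 0 := by
  simp only [coc1, map_add, map_mul, eval_X]
  decide

theorem sum_eval_axisPoints_coc2 : ∑ k, eval (axisPoints k) coc2 = 1 := by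
  simp only [coc2, map_add, map_mul, map_pow, eval_X]
  decide

theorem sum_eval_cubePoints_coc1 : ∑ k, eval (cubePoints k) coc1 = 1 := by
  simp only [coc1, map_add, map_mul, eval_X]
  decide

theorem sum_eval_cubePoints_coc2 : ∑ k, eval (cubePoints k) coc2 = 0 := by
  simp only [coc2, map_add, map_mul, map_pow, eval_X]
  decide

theorem statement18_general (α β : ZMod 2) (h : ¬(α = 0 ∧ β = 0))
    (P : MvPolynomial (Fin 2) (ZMod 2)) :
    C α * coc1 + C β * coc2 +
      ∑ i : Fin 5, aeval ![X i, yPoly 2 i] P ≠ 0 := by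
  intro hT
  have hβ := sum_eval_cocycle_add_coboundary axisPoints even_card_hexPoint_axisPoints α β P
  have hα := sum_eval_cocycle_add_coboundary cubePoints even_card_hexPoint_cubePoints α β P
  simp only [hT, map_zero, sum_const_zero, sum_eval_axisPoints_coc1,
    sum_eval_axisPoints_coc2] at hβ
  simp only [hT, map_zero, sum_const_zero, sum_eval_cubePoints_coc1,
    sum_eval_cubePoints_coc2] at hα
  exact h ⟨by simpa using hα.symm, by simpa using hβ.symm⟩

/-- in 𝔽₂[x₁,…,x₅], for every (α,β) ≠ (0,0) and every homogeneous polynomial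
P(X,Y) of degree 3, the polynomial α·c₁ + β·c₂ + Σ_{i=1}^{5} P(x_i, y_i(x)) is nonzero;
hence the classes of the hexagon 4-cocycles c₁ and c₂ are linearly independent and
dim H⁴_{2,3} ≥ 2. -/
theorem statement18 (α β : ZMod 2) (h : ¬(α = 0 ∧ β = 0))
    (P : MvPolynomial (Fin 2) (ZMod 2)) (hP : P.IsHomogeneous 3) :
    C α * coc1 + C β * coc2 +
      ∑ i : Fin 5, aeval ![X i, yPoly 2 i] P ≠ 0 :=
  statement18_general α β h P
end
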